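/- arXiv:math/0004112 — 6 statements merged into one kernel-verified Lean document; each statement's English description precedes it below -/
import Mathlib

section
/- Let M be a finite-dimensional k-vector space equipped with a k⟨X⟩-module structure (u_1, …, u_μ), and let χ_M be its characteristic series. Then M_{χ_M} is a finite-dimensional k-vector space; in fact dim_k M_{χ_M} ≤ (dim_k M)². -/
noncomputable section

variable (k : Type*) [Field k] (μ : ℕ)

/-- The Fox derivative `∂ᵢ` on noncommutative formal series. -/
def fox (i : Fin μ) : (FreeMonoid (Fin μ) → k) →ₗ[k] (FreeMonoid (Fin μ) → k) where
  toFun S := fun w => S (FreeMonoid.of i * w)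
  map_add' _ _ := rfl
  map_smul' _ _ := rfl

/-- `M_S`: the smallest subspace containing `S` and invariant under all Fox derivatives. -/
def seriesModule (S : FreeMonoid (Fin μ) → k) : Submodule k (FreeMonoid (Fin μ) → k) :=
  sInf {p | S ∈ p ∧ ∀ i : Fin μ, ∀ f ∈ p, fox k μ i f ∈ p}

lemma fox_mem_seriesModule {S f : FreeMonoid (Fin μ) → k}
    (hf : f ∈ seriesModule k μ S) (i : Fin μ) : fox k μ i f ∈ seriesModule k μ S := by
  rw [seriesModule, Submodule.mem_sInf] at hf ⊢
  exact fun p hp => hp.2 i f (hf p hp)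

/-- The Fox derivatives viewed as endomorphisms of `M_S`. -/
def foxOn (S : FreeMonoid (Fin μ) → k) (i : Fin μ) : Module.End k (seriesModule k μ S) :=
  (fox k μ i).restrict (fun f hf => fox_mem_seriesModule k μ hf i)

variable {M : Type*} [AddCommGroup M] [Module k M]

/-- For a word `w = x_{i₁} ⋯ x_{i_p}`, `alpha u w = u_{i_p} ∘ ⋯ ∘ u_{i₁}`. -/
def alpha (u : Fin μ → Module.End k M) (w : FreeMonoid (Fin μ)) : Module.End k M :=
  (FreeMonoid.toList w).foldl (fun acc i => u i * acc) 1

/-- The characteristic series of a module structure. -/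
def chi (u : Fin μ → Module.End k M) : FreeMonoid (Fin μ) → k :=
  fun w => LinearMap.trace k M (alpha k μ u w)

/-- A module structure is simple if it is nonzero and has no proper nonzero
invariant subspaces. -/
def IsSimpleStruct (u : Fin μ → Module.End k M) : Prop :=
  (∃ x : M, x ≠ 0) ∧
    ∀ p : Submodule k M, (∀ i : Fin μ, ∀ x ∈ p, u i x ∈ p) → p = ⊥ ∨ p = ⊤

/-- A module structure is semisimple if the space is an internal direct sum of
simple invariant subspaces. -/
def IsSemisimpleStruct (u : Fin μ → Module.End k M) : Prop :=
  ∃ (n : ℕ) (s : Fin n → Submodule k M) (hs : ∀ r i, ∀ x ∈ s r, u i x ∈ s r),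
    DirectSum.IsInternal s ∧
      ∀ r, IsSimpleStruct k μ (fun i => (u i).restrict (fun x hx => hs r i x hx))

end



section Aux
variable (k : Type*) [Field k] (μ : ℕ) {M : Type*} [AddCommGroup M] [Module k M]

lemma alpha_cons (u : Fin μ → Module.End k M) (i : Fin μ) (w : FreeMonoid (Fin μ)) :
    alpha k μ u (FreeMonoid.of i * w) = alpha k μ u w * u i := by
  have key : ∀ (l : List (Fin μ)) (a : Module.End k M),
      l.foldl (fun acc j => u j * acc) a = l.foldl (fun acc j => u j * acc) 1 * a := by
    intro l
    induction l with
    | nil => intro a; simp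
    | cons j l ih =>
      intro a
      simp only [List.foldl_cons]
      rw [ih (u j * a), ih (u j * 1)]
      simp [mul_assoc]
  show (FreeMonoid.toList (FreeMonoid.of i * w)).foldl _ 1 = _
  have : FreeMonoid.toList (FreeMonoid.of i * w) = i :: FreeMonoid.toList w := rfl
  rw [this]
  simp only [List.foldl_cons]
  rw [key (FreeMonoid.toList w) (u i * 1)]
  simp [alpha]

/-- The linear map sending an endomorphism `A` to the series `w ↦ Tr(α(w) * A)`. -/
noncomputable def traceSeries [FiniteDimensional k M] (u : Fin μ → Module.End k M) :
    Module.End k M →ₗ[k] (FreeMonoid (Fin μ) → k) where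
  toFun A := fun w => LinearMap.trace k M (alpha k μ u w * A)
  map_add' A B := by ext w; simp [mul_add]
  map_smul' c A := by ext w; simp

end Aux

/-- For a finite-dimensional `k⟨X⟩`-module structure `(M, u)`,
the space `M_{χ_M}` is finite-dimensional, of dimension at most `(dim M)²`. -/
theorem finiteDimensional_seriesModule_chi
    (k : Type*) [Field k] (μ : ℕ) (hμ : 1 ≤ μ)
    (M : Type*) [AddCommGroup M] [Module k M] [FiniteDimensional k M]
    (u : Fin μ → Module.End k M) :
    FiniteDimensional k (seriesModule k μ (chi k μ u)) ∧
      Module.finrank k (seriesModule k μ (chi k μ u)) ≤ (Module.finrank k M) ^ 2 := by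
  have hle : seriesModule k μ (chi k μ u) ≤ LinearMap.range (traceSeries k μ u) := by
    apply sInf_le
    constructor
    · exact ⟨1, by ext w; simp [traceSeries, chi]⟩
    · rintro i f ⟨A, rfl⟩
      refine ⟨u i * A, ?_⟩
      ext w
      simp [traceSeries, fox, alpha_cons, mul_assoc]
  haveI : FiniteDimensional k (LinearMap.range (traceSeries k μ u)) := inferInstance
  haveI : FiniteDimensional k (seriesModule k μ (chi k μ u)) :=
    Submodule.finiteDimensional_of_le hle
  refine ⟨inferInstance, ?_⟩
  calc Module.finrank k (seriesModule k μ (chi k μ u))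
      ≤ Module.finrank k (LinearMap.range (traceSeries k μ u)) := Submodule.finrank_mono hle
    _ ≤ Module.finrank k (Module.End k M) := (traceSeries k μ u).finrank_range_le
    _ = (Module.finrank k M) ^ 2 := by
        rw [Module.finrank_linearMap, sq]
end

section
/- Let k be an algebraically closed field and let M be a finite-dimensional simple k⟨X⟩-module structure of dimension d = dim_k M, with characteristic series χ_M. Then M_{χ_M}, equipped with the endomorphisms ∂_1, …, ∂_μ, is isomorphic as a k⟨X⟩-module structure to the direct sum of d copies of M. -/
namespace SeriesAux

variable {k : Type*} [Field k] {μ : ℕ} {M : Type*} [AddCommGroup M] [Module k M]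

lemma foldl_eq (u : Fin μ → Module.End k M) (l : List (Fin μ)) (a : Module.End k M) :
    l.foldl (fun acc i => u i * acc) a = l.foldl (fun acc i => u i * acc) 1 * a := by
  induction l generalizing a with
  | nil => simp
  | cons i l ih =>
    simp only [List.foldl_cons]
    rw [ih (u i * a), ih (u i * 1), mul_one, mul_assoc]

lemma alpha_one (u : Fin μ → Module.End k M) : alpha k μ u 1 = 1 := rfl

lemma alpha_of (u : Fin μ → Module.End k M) (i : Fin μ) :
    alpha k μ u (FreeMonoid.of i) = u i := by
  show List.foldl _ 1 (FreeMonoid.toList (FreeMonoid.of i)) = u i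
  simp [FreeMonoid.toList_of]

lemma alpha_mul (u : Fin μ → Module.End k M) (v w : FreeMonoid (Fin μ)) :
    alpha k μ u (v * w) = alpha k μ u w * alpha k μ u v := by
  show List.foldl _ 1 (FreeMonoid.toList (v * w)) = _
  rw [FreeMonoid.toList_mul, List.foldl_append]
  exact foldl_eq u _ _


/-- The auxiliary linear map `A ↦ (w ↦ Tr(α(w) ∘ A))`. -/
noncomputable def phi (u : Fin μ → Module.End k M) [Module.Finite k M] [Module.Free k M] :
    Module.End k M →ₗ[k] (FreeMonoid (Fin μ) → k) where
  toFun A := fun w => LinearMap.trace k M (alpha k μ u w * A)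
  map_add' A B := by funext w; simp [mul_add]
  map_smul' c A := by funext w; simp [mul_smul_comm]

variable [FiniteDimensional k M]

lemma phi_apply (u : Fin μ → Module.End k M) (A : Module.End k M) (w : FreeMonoid (Fin μ)) :
    phi u A w = LinearMap.trace k M (alpha k μ u w * A) := rfl

lemma chi_eq_phi_one (u : Fin μ → Module.End k M) : chi k μ u = phi u 1 := by
  funext w; rw [phi_apply, mul_one]; rfl

lemma fox_phi (u : Fin μ → Module.End k M) (i : Fin μ) (A : Module.End k M) :
    fox k μ i (phi u A) = phi u (u i * A) := by
  funext w
  show phi u A (FreeMonoid.of i * w) = _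
  rw [phi_apply, phi_apply, alpha_mul, alpha_of, mul_assoc]

lemma schur [IsAlgClosed k] {u : Fin μ → Module.End k M} (hs : IsSimpleStruct k μ u)
    (f : Module.End k M) (hf : ∀ i, f * u i = u i * f) : ∃ c : k, f = c • 1 := by
  obtain ⟨x₀, hx₀⟩ := hs.1
  have : Nontrivial M := ⟨x₀, 0, hx₀⟩
  obtain ⟨c, hc⟩ := Module.End.exists_eigenvalue f
  refine ⟨c, ?_⟩
  have h1 : ∀ i : Fin μ, ∀ x ∈ f.eigenspace c, u i x ∈ f.eigenspace c := by
    intro i x hx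
    rw [Module.End.mem_eigenspace_iff] at hx ⊢
    have : f (u i x) = u i (f x) := by
      have := congrArg (fun g : Module.End k M => g x) (hf i)
      simpa [Module.End.mul_apply] using this
    rw [this, hx, map_smul]
  rcases hs.2 _ h1 with h | h
  · exact absurd h hc
  · ext x
    have hx : x ∈ f.eigenspace c := h ▸ Submodule.mem_top
    rw [Module.End.mem_eigenspace_iff] at hx
    simpa using hx


section Burnside

variable [IsAlgClosed k] {u : Fin μ → Module.End k M}

lemma one_mem_S (u : Fin μ → Module.End k M) :
    (1 : Module.End k M) ∈ Submodule.span k (Set.range (alpha k μ u)) :=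
  Submodule.subset_span ⟨1, alpha_one u⟩

lemma umul_mem (i : Fin μ) {A : Module.End k M}
    (hA : A ∈ Submodule.span k (Set.range (alpha k μ u))) :
    u i * A ∈ Submodule.span k (Set.range (alpha k μ u)) := by
  have h : Submodule.map (LinearMap.mulLeft k (u i))
      (Submodule.span k (Set.range (alpha k μ u))) ≤
      Submodule.span k (Set.range (alpha k μ u)) := by
    rw [Submodule.map_span, Submodule.span_le]
    rintro _ ⟨_, ⟨w, rfl⟩, rfl⟩
    exact Submodule.subset_span ⟨w * FreeMonoid.of i, by
      rw [alpha_mul, alpha_of]; rfl⟩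
  exact h ⟨A, hA, rfl⟩

lemma density (hs : IsSimpleStruct k μ u) :
    ∀ (n : ℕ) (v : Fin n → M), LinearIndependent k v → ∀ y : Fin n → M,
      ∃ A ∈ Submodule.span k (Set.range (alpha k μ u)), ∀ j, A (v j) = y j := by
  intro n
  induction n with
  | zero => exact fun v _ y => ⟨1, one_mem_S u, fun j => j.elim0⟩
  | succ n ih =>
    intro v hv y
    set S := Submodule.span k (Set.range (alpha k μ u)) with hS
    have hv' : LinearIndependent k (v ∘ Fin.castSucc) :=
      hv.comp _ (Fin.castSucc_injective n)
    set I : Submodule k (Module.End k M) :=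
      S ⊓ ⨅ j : Fin n, LinearMap.ker (LinearMap.applyₗ (v j.castSucc)) with hIdef
    have memI : ∀ B : Module.End k M,
        (B ∈ I ↔ B ∈ S ∧ ∀ j : Fin n, B (v j.castSucc) = 0) := by
      intro B
      simp [hIdef, Submodule.mem_iInf, LinearMap.mem_ker, LinearMap.applyₗ]
      exact fun _ => Iff.rfl
    set W : Submodule k M := I.map (LinearMap.applyₗ (v (Fin.last n))) with hWdef
    have hWinv : ∀ i : Fin μ, ∀ x ∈ W, u i x ∈ W := by
      rintro i x ⟨B, hB, rfl⟩
      replace hB := (memI B).1 hB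
      refine ⟨u i * B, (memI _).2 ⟨umul_mem i hB.1, fun j => ?_⟩, ?_⟩
      · show u i (B (v j.castSucc)) = 0
        rw [hB.2 j, map_zero]
      · rfl
    rcases hs.2 W hWinv with hbot | htop
    · exfalso
      set π : S →ₗ[k] (Fin n → M) :=
        LinearMap.pi (fun j => (LinearMap.applyₗ (v j.castSucc)).comp S.subtype) with hπdef
      set ε : S →ₗ[k] M := (LinearMap.applyₗ (v (Fin.last n))).comp S.subtype with hεdef
      have hπ : Function.Surjective π := by
        intro z
        obtain ⟨A, hA, hAv⟩ := ih (v ∘ Fin.castSucc) hv' z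
        exact ⟨⟨A, hA⟩, funext fun j => hAv j⟩
      have hker : LinearMap.ker π ≤ LinearMap.ker ε := by
        intro B hB
        rw [LinearMap.mem_ker] at hB ⊢
        have hBW : (B : Module.End k M) (v (Fin.last n)) ∈ W := by
          refine ⟨B, (memI _).2 ⟨B.2, fun j => ?_⟩, rfl⟩
          exact congrFun hB j
        rw [hbot] at hBW
        simpa [hεdef] using hBW
      set q := π.quotKerEquivOfSurjective hπ with hq
      set f : (Fin n → M) →ₗ[k] M :=
        ((LinearMap.ker π).liftQ ε hker) ∘ₗ (q.symm : (Fin n → M) →ₗ[k] _) with hfdef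
      have hf : ∀ B : S, f (π B) = ε B := by
        intro B
        have h1 : q.symm (π B) = Submodule.Quotient.mk B := by
          apply q.injective
          rw [LinearEquiv.apply_symm_apply]
          simp [hq, LinearMap.quotKerEquivOfSurjective,
            LinearMap.quotKerEquivRange_apply_mk]
        simp [hfdef, h1]
      have hequiv : ∀ (i : Fin μ) (x : Fin n → M),
          f (fun j => u i (x j)) = u i (f x) := by
        intro i x
        obtain ⟨B, rfl⟩ := hπ x
        have hB' : (u i * (B : Module.End k M)) ∈ S := umul_mem i B.2
        have hπB' : π ⟨_, hB'⟩ = fun j => u i (π B j) := by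
          funext j
          show (u i * (B : Module.End k M)) (v j.castSucc) = _
          rfl
        calc f (fun j => u i (π B j)) = f (π ⟨_, hB'⟩) := by rw [hπB']
          _ = ε ⟨_, hB'⟩ := hf _
          _ = u i (ε B) := rfl
          _ = u i (f (π B)) := by rw [hf]
      have hgj : ∀ j : Fin n, ∃ c : k,
          f ∘ₗ LinearMap.single k (fun _ : Fin n => M) j = c • 1 := by
        intro j
        apply schur hs
        intro i
        ext x
        show f (Pi.single j (u i x)) = u i (f (Pi.single j x))
        have hsingle : (Pi.single j (u i x) : Fin n → M)
            = fun j' => u i ((Pi.single j x : Fin n → M) j') := by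
          funext j'
          rcases eq_or_ne j' j with rfl | h
          · simp
          · simp [Pi.single_eq_of_ne h]
        rw [hsingle]
        exact hequiv i _
      choose c hc using hgj
      have hv1 : v (Fin.last n) = ∑ j : Fin n, c j • v j.castSucc := by
        have e1 : ε ⟨1, one_mem_S u⟩ = v (Fin.last n) := rfl
        have e2 : π ⟨1, one_mem_S u⟩ = fun j => v j.castSucc := rfl
        rw [← e1, ← hf, e2]
        have e3 : (fun j => v j.castSucc)
            = ∑ j : Fin n, Pi.single j (v j.castSucc) := by
          funext j'
          rw [Finset.sum_apply]
          exact (Fintype.sum_pi_single j' (fun j : Fin n => v j.castSucc)).symm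
        rw [e3, map_sum]
        refine Finset.sum_congr rfl fun j _ => ?_
        have := congrArg (fun g : M →ₗ[k] M => g (v j.castSucc)) (hc j)
        simpa using this
      have hnotmem : v (Fin.last n) ∉
          Submodule.span k (v '' Set.range Fin.castSucc) := by
        refine hv.notMem_span_image ?_
        rintro ⟨j, hj⟩
        exact absurd hj (Fin.castSucc_lt_last j).ne
      refine hnotmem ?_
      rw [hv1]
      refine Submodule.sum_mem _ fun j _ => Submodule.smul_mem _ _ ?_
      exact Submodule.subset_span ⟨j.castSucc, ⟨j, rfl⟩, rfl⟩
    · obtain ⟨A₀, hA₀, hA₀v⟩ := ih (v ∘ Fin.castSucc) hv' (fun j => y j.castSucc)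
      have hmem : y (Fin.last n) - A₀ (v (Fin.last n)) ∈ W := htop ▸ Submodule.mem_top
      obtain ⟨C, hC, hCv⟩ := hmem
      replace hC := (memI C).1 hC
      refine ⟨A₀ + C, S.add_mem hA₀ hC.1, fun j => ?_⟩
      induction j using Fin.lastCases with
      | last =>
        have : C (v (Fin.last n)) = y (Fin.last n) - A₀ (v (Fin.last n)) := hCv
        simp [LinearMap.add_apply, this]
      | cast j =>
        have h0 : C (v j.castSucc) = 0 := hC.2 j
        have := hA₀v j
        simp only [Function.comp_apply] at this
        simp [LinearMap.add_apply, h0, this]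

lemma span_alpha_eq_top (hs : IsSimpleStruct k μ u) :
    Submodule.span k (Set.range (alpha k μ u)) = ⊤ := by
  rw [eq_top_iff]
  intro T _
  let b := Module.finBasis k M
  obtain ⟨A, hA, hAv⟩ := density hs (Module.finrank k M) b
    b.linearIndependent (fun j => T (b j))
  have hAT : A = T := b.ext fun j => hAv j
  exact hAT ▸ hA

open TensorProduct in
lemma phi_injective (hs : IsSimpleStruct k μ u) : Function.Injective (phi u) := by
  rw [← LinearMap.ker_eq_bot, LinearMap.ker_eq_bot']
  intro A hA
  have htr : ∀ B : Module.End k M, LinearMap.trace k M (B * A) = 0 := by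
    intro B
    have hmem : B ∈ Submodule.span k (Set.range (alpha k μ u)) :=
      span_alpha_eq_top hs ▸ Submodule.mem_top
    have hle : Submodule.span k (Set.range (alpha k μ u)) ≤
        LinearMap.ker ((LinearMap.trace k M) ∘ₗ (LinearMap.mulRight k A)) := by
      rw [Submodule.span_le]
      rintro _ ⟨w, rfl⟩
      rw [SetLike.mem_coe, LinearMap.mem_ker]
      exact congrFun hA w
    exact hle hmem
  ext x
  rw [LinearMap.zero_apply, ← Module.forall_dual_apply_eq_zero_iff k]
  intro l
  have h1 : (dualTensorHom k M M (l ⊗ₜ[k] x)) * A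
      = dualTensorHom k M M ((l ∘ₗ A) ⊗ₜ[k] x) := by
    ext y
    simp [Module.End.mul_apply, dualTensorHom_apply]
  have h2 := htr (dualTensorHom k M M (l ⊗ₜ[k] x))
  rw [h1, LinearMap.trace_eq_contract_apply, contractLeft_apply] at h2
  simpa using h2

lemma chi_mem (u : Fin μ → Module.End k M) :
    chi k μ u ∈ seriesModule k μ (chi k μ u) := by
  rw [seriesModule, Submodule.mem_sInf]
  exact fun p hp => hp.1

lemma phi_alpha_mem (u : Fin μ → Module.End k M) (w : FreeMonoid (Fin μ)) :
    phi u (alpha k μ u w) ∈ seriesModule k μ (chi k μ u) := by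
  suffices h : ∀ l : List (Fin μ),
      phi u (alpha k μ u (FreeMonoid.ofList l)) ∈ seriesModule k μ (chi k μ u) by
    simpa [FreeMonoid.ofList_toList] using h (FreeMonoid.toList w)
  intro l
  induction l using List.reverseRecOn with
  | nil =>
    have : FreeMonoid.ofList ([] : List (Fin μ)) = 1 := rfl
    rw [this, alpha_one, ← chi_eq_phi_one]
    exact chi_mem u
  | append_singleton l i ih =>
    rw [FreeMonoid.ofList_append, FreeMonoid.ofList_singleton, alpha_mul, alpha_of,
      ← fox_phi]
    exact fox_mem_seriesModule k μ ih i

lemma range_phi_eq (hs : IsSimpleStruct k μ u) :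
    LinearMap.range (phi u) = seriesModule k μ (chi k μ u) := by
  apply le_antisymm
  · rintro _ ⟨A, rfl⟩
    have hA : A ∈ Submodule.span k (Set.range (alpha k μ u)) :=
      span_alpha_eq_top hs ▸ Submodule.mem_top
    refine Submodule.span_induction ?_ ?_ ?_ ?_ hA
    · rintro _ ⟨w, rfl⟩
      exact phi_alpha_mem u w
    · rw [map_zero]; exact Submodule.zero_mem _
    · intro a b _ _ ha hb; rw [map_add]; exact Submodule.add_mem _ ha hb
    · intro c a _ ha; rw [map_smul]; exact Submodule.smul_mem _ c ha
  · refine sInf_le ⟨⟨1, (chi_eq_phi_one u).symm⟩, ?_⟩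
    rintro i _ ⟨A, rfl⟩
    exact ⟨u i * A, (fox_phi u i A).symm⟩

end Burnside

end SeriesAux


/-- over an algebraically closed field, for a simple finite-dimensional
module structure `M` of dimension `d`, the module `M_{χ_M}` (with the Fox derivative
action) is isomorphic to the direct sum of `d` copies of `M`. -/
theorem seriesModule_chi_of_simple
    (k : Type*) [Field k] [IsAlgClosed k] (μ : ℕ) (hμ : 1 ≤ μ)
    (M : Type*) [AddCommGroup M] [Module k M] [FiniteDimensional k M]
    (u : Fin μ → Module.End k M) (hsimple : IsSimpleStruct k μ u) :
    ∃ e : (Fin (Module.finrank k M) → M) ≃ₗ[k] seriesModule k μ (chi k μ u),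
      ∀ (i : Fin μ) (v : Fin (Module.finrank k M) → M),
        e (fun j => u i (v j)) = foxOn k μ (chi k μ u) i (e v) := by
    classical
  open SeriesAux in
  have hmem : ∀ A : Module.End k M, phi u A ∈ seriesModule k μ (chi k μ u) := fun A =>
    SeriesAux.range_phi_eq hsimple ▸ LinearMap.mem_range_self _ A
  let φc : Module.End k M →ₗ[k] seriesModule k μ (chi k μ u) :=
    (SeriesAux.phi u).codRestrict _ hmem
  have hbij : Function.Bijective φc := by
    constructor
    · intro a b hab
      exact SeriesAux.phi_injective hsimple (congrArg Subtype.val hab)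
    · intro s
      have hs : (s : FreeMonoid (Fin μ) → k) ∈ LinearMap.range (SeriesAux.phi u) :=
        (SeriesAux.range_phi_eq hsimple).symm ▸ s.2
      obtain ⟨A, hA⟩ := hs
      exact ⟨A, Subtype.ext hA⟩
  let e1 := LinearEquiv.ofBijective φc hbij
  let b := Module.finBasis k M
  let e0 : (Fin (Module.finrank k M) → M) ≃ₗ[k] Module.End k M := b.constr k
  refine ⟨e0.trans e1, fun i v => ?_⟩
  apply Subtype.ext
  have h0 : e0 (fun j => u i (v j)) = u i * e0 v := by
    apply b.ext
    intro j
    simp [e0, Module.Basis.constr_basis, Module.End.mul_apply]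
  show (SeriesAux.phi u) (e0 fun j => u i (v j)) = _
  rw [h0, ← SeriesAux.fox_phi]
  rfl
end

section
/- The unique k-algebra homomorphism δ : k⟨x_1, …, x_μ⟩ → P_μ determined by δ(x_i) = −z̄·π̄_i for every i (where z̄ and π̄_i denote the images of the generators z and π_i in the quotient P_μ) is injective. -/
noncomputable section

variable (k : Type*) [Field k] (μ : ℕ)

/-- The defining relations of Farber's algebra `P_μ`: `π_i π_j = δ_{ij} π_i` and
`π_1 + ⋯ + π_μ = 1`.  The generator `z` corresponds to `none`, and `π_i` to `some i`. -/
inductive PmuRel : FreeAlgebra k (Option (Fin μ)) → FreeAlgebra k (Option (Fin μ)) → Prop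
  | proj (i j : Fin μ) :
      PmuRel (FreeAlgebra.ι k (some i) * FreeAlgebra.ι k (some j))
        (if i = j then FreeAlgebra.ι k (some i) else 0)
  | sum : PmuRel (∑ i : Fin μ, FreeAlgebra.ι k (some i)) 1

/-- Farber's algebra `P_μ`, the quotient of the free algebra on `z, π_1, …, π_μ`
by the defining relations. -/
abbrev Pmu := RingQuot (PmuRel k μ)

/-- The image `z̄` of the generator `z` in `P_μ`. -/
def zbar : Pmu k μ := RingQuot.mkAlgHom k (PmuRel k μ) (FreeAlgebra.ι k none)

/-- The image `π̄ᵢ` of the generator `πᵢ` in `P_μ`. -/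
def pibar (i : Fin μ) : Pmu k μ := RingQuot.mkAlgHom k (PmuRel k μ) (FreeAlgebra.ι k (some i))

/-- The algebra homomorphism `δ : k⟨x_1, …, x_μ⟩ → P_μ`, `x_i ↦ -z̄·π̄ᵢ`. -/
def deltaHom : FreeAlgebra k (Fin μ) →ₐ[k] Pmu k μ :=
  FreeAlgebra.lift k (fun i => -(zbar k μ * pibar k μ i))

abbrev Vmu := Fin μ → FreeAlgebra k (Fin μ)

def Zmap : Vmu k μ →ₗ[k] Vmu k μ where
  toFun v := fun _ => -(∑ j, FreeAlgebra.ι k j * v j)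
  map_add' v w := by
    funext x
    simp [mul_add, Finset.sum_add_distrib]
    abel
  map_smul' r v := by
    funext x
    simp [Finset.smul_sum, mul_smul_comm]

def Pmap (i : Fin μ) : Vmu k μ →ₗ[k] Vmu k μ where
  toFun v := Pi.single i (v i)
  map_add' v w := by simp [Pi.single_add]
  map_smul' r v := by simp [Pi.single_smul]

def rho0 : FreeAlgebra k (Option (Fin μ)) →ₐ[k] Module.End k (Vmu k μ) :=
  FreeAlgebra.lift k (fun o => o.elim (Zmap k μ) (Pmap k μ))

lemma rho0_rel : ∀ ⦃x y⦄, PmuRel k μ x y → rho0 k μ x = rho0 k μ y := by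
  intro x y h
  induction h with
  | proj i j =>
    rw [map_mul]
    ext v m
    by_cases hij : i = j
    · subst hij
      simp [rho0, Pmap, Module.End.mul_apply]
    · simp [rho0, Pmap, Module.End.mul_apply, hij, Pi.single_eq_of_ne (Ne.symm hij)]
  | sum =>
    rw [map_sum, map_one]
    apply LinearMap.ext
    intro v
    simp only [rho0, FreeAlgebra.lift_ι_apply, Option.elim, LinearMap.coe_sum,
      Finset.sum_apply, Pmap, LinearMap.coe_mk, AddHom.coe_mk, Module.End.one_apply]
    exact Finset.univ_sum_single v

def rho : Pmu k μ →ₐ[k] Module.End k (Vmu k μ) :=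
  RingQuot.liftAlgHom k ⟨rho0 k μ, rho0_rel k μ⟩

lemma key (a : FreeAlgebra k (Fin μ)) :
    ∀ c, rho k μ (deltaHom k μ a) (fun _ => c) = fun _ => a * c := by
  induction a with
  | grade0 r =>
    intro c
    funext m
    simp [Algebra.smul_def]
  | grade1 i =>
    intro c
    have h1 : deltaHom k μ (FreeAlgebra.ι k i) = -(zbar k μ * pibar k μ i) :=
      FreeAlgebra.lift_ι_apply _ _
    rw [h1, map_neg, map_mul]
    have hz : rho k μ (zbar k μ) = Zmap k μ := by
      rw [zbar, rho, RingQuot.liftAlgHom_mkAlgHom_apply, rho0, FreeAlgebra.lift_ι_apply]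
      rfl
    have hp : rho k μ (pibar k μ i) = Pmap k μ i := by
      rw [pibar, rho, RingQuot.liftAlgHom_mkAlgHom_apply, rho0, FreeAlgebra.lift_ι_apply]
      rfl
    rw [hz, hp]
    funext m
    simp [Zmap, Pmap, Module.End.mul_apply, Pi.single_apply, Finset.mul_sum,
      mul_ite, Finset.sum_ite_eq']
  | mul a b ha hb =>
    intro c
    rw [map_mul, map_mul, Module.End.mul_apply, hb, ha, mul_assoc]
  | add a b ha hb =>
    intro c
    funext m
    have := congrFun (ha c) m
    have := congrFun (hb c) m
    simp only [map_add, LinearMap.add_apply, Pi.add_apply, add_mul]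
    rw [congrFun (ha c) m, congrFun (hb c) m]

end


/-- the homomorphism `δ : k⟨x_1, …, x_μ⟩ → P_μ`, `x_i ↦ -z̄·π̄ᵢ`,
is injective. -/
theorem deltaHom_injective (k : Type*) [Field k] (μ : ℕ) (hμ : 1 ≤ μ) :
    Function.Injective (deltaHom k μ) := by
  intro a b h
  have ha := key k μ a 1
  rw [h, key k μ b 1] at ha
  have := congrFun ha ⟨0, hμ⟩
  have h2 : b = a := by simpa using this
  exact h2.symm
end

section
/- The unique k-algebra homomorphism from the free associative unital k-algebra on μ generators y_1, …, y_μ to P_μ sending y_1 ↦ z̄ and y_{j+1} ↦ z̄·π̄_j for 1 ≤ j ≤ μ − 1 (where z̄ and π̄_j denote the images of the generators in P_μ) is injective; i.e., the μ elements z, zπ_1, …, zπ_{μ−1} generate a free subalgebra of P_μ. -/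
set_option linter.unusedSectionVars false

noncomputable section

namespace FarberAux

variable (k : Type*) [Field k] {μ : ℕ} [NeZero μ]

abbrev V (k : Type*) [Field k] (μ : ℕ) : Type _ := List (Fin μ) →₀ k

def bb (u : List (Fin μ)) : V k μ := Finsupp.single u 1

def opOf (v : List (Fin μ) → V k μ) : Module.End k (V k μ) :=
  Finsupp.linearCombination k v

@[simp] lemma opOf_bb (v : List (Fin μ) → V k μ) (u : List (Fin μ)) :
    opOf k v (bb k u) = v u := by
  simp [opOf, bb]

def Zop : Module.End k (V k μ) := opOf k fun u => bb k (0 :: u)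

def code (a : Fin μ) : List (Fin μ) := if (a : ℕ) = 0 then [0] else [0, a]

def projv (j : Fin μ) : List (Fin μ) → V k μ
  | [] => bb k [j + 1]
  | a :: u => if a = 0 then bb k ((j+1) :: a :: u) else if a = j + 1 then bb k (a :: u) else 0

def Proj (j : Fin μ) : Module.End k (V k μ) := opOf k (projv k j)

@[simp] lemma Zop_bb (u : List (Fin μ)) : Zop k (bb k u) = bb k (0 :: u) := opOf_bb k _ u

lemma Proj_bb_nil (j : Fin μ) : Proj k j (bb k ([] : List (Fin μ))) = bb k [j+1] := opOf_bb k _ _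

lemma Proj_bb_zero (j : Fin μ) (u : List (Fin μ)) :
    Proj k j (bb k (0 :: u)) = bb k ((j+1) :: 0 :: u) := by
  rw [Proj, opOf_bb]; simp [projv]

lemma Proj_bb_head (j a : Fin μ) (u : List (Fin μ)) (ha : a ≠ 0) :
    Proj k j (bb k (a :: u)) = if a = j + 1 then bb k (a :: u) else 0 := by
  rw [Proj, opOf_bb]; simp [projv, ha]

lemma end_ext {f g : Module.End k (V k μ)} (h : ∀ u, f (bb k u) = g (bb k u)) : f = g := by
  refine Finsupp.lhom_ext fun u c => ?_
  have h1 : (Finsupp.single u c : V k μ) = c • bb k u := by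
    simp [bb, Finsupp.smul_single]
  rw [h1, map_smul, map_smul, h]

-- arithmetic helpers
lemma val_succ {j : Fin μ} (h : (j : ℕ) + 1 < μ) : ((j + 1 : Fin μ) : ℕ) = (j : ℕ) + 1 := by
  have h1 : ((1 : Fin μ) : ℕ) = 1 % μ := rfl
  rw [Fin.val_add, h1]
  have hμ : 1 ≤ μ := by omega
  rcases Nat.lt_or_ge 1 μ with h2 | h2
  · rw [Nat.mod_eq_of_lt h2, Nat.mod_eq_of_lt h]
  · interval_cases μ <;> omega

lemma succ_ne_zero {j : Fin μ} (h : (j : ℕ) + 1 < μ) : (j + 1 : Fin μ) ≠ 0 := by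
  intro hc
  have := val_succ h
  rw [hc] at this
  simp at this

lemma succ_inj {i j : Fin μ} (hi : (i : ℕ) + 1 < μ) (hj : (j : ℕ) + 1 < μ)
    (h : (j + 1 : Fin μ) = i + 1) : i = j := by
  have := congrArg Fin.val h
  rw [val_succ hi, val_succ hj] at this
  exact Fin.ext (by omega)

lemma proj_orth (i j : Fin μ) (hi : (i : ℕ) + 1 < μ) (hj : (j : ℕ) + 1 < μ) :
    Proj k i * Proj k j = if i = j then Proj k i else 0 := by
  by_cases hij : i = j
  · subst hij
    rw [if_pos rfl]
    refine end_ext k fun u => ?_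
    rw [Module.End.mul_apply]
    match u with
    | [] =>
      rw [Proj_bb_nil, Proj_bb_head k i _ _ (succ_ne_zero hi), if_pos rfl]
    | 0 :: u =>
      rw [Proj_bb_zero, Proj_bb_head k i _ _ (succ_ne_zero hi), if_pos rfl]
    | a :: u =>
      by_cases ha : a = 0
      · subst ha
        rw [Proj_bb_zero, Proj_bb_head k i _ _ (succ_ne_zero hi), if_pos rfl]
      · rw [Proj_bb_head k i _ _ ha]
        split_ifs with h2
        · rw [Proj_bb_head k i _ _ ha, if_pos h2]
        · rw [map_zero]
  · rw [if_neg hij]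
    refine end_ext k fun u => ?_
    rw [Module.End.mul_apply, LinearMap.zero_apply]
    match u with
    | [] =>
      rw [Proj_bb_nil, Proj_bb_head k i _ _ (succ_ne_zero hj), if_neg]
      intro hc; exact hij (succ_inj hi hj hc)
    | 0 :: u =>
      rw [Proj_bb_zero, Proj_bb_head k i _ _ (succ_ne_zero hj), if_neg]
      intro hc; exact hij (succ_inj hi hj hc)
    | a :: u =>
      by_cases ha : a = 0
      · subst ha
        rw [Proj_bb_zero, Proj_bb_head k i _ _ (succ_ne_zero hj), if_neg]
        intro hc; exact hij (succ_inj hi hj hc)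
      · rw [Proj_bb_head k j _ _ ha]
        split_ifs with h2
        · rw [Proj_bb_head k i _ _ ha, if_neg]
          intro hc
          exact hij (Fin.ext (by
            have := congrArg Fin.val (h2.symm.trans hc)
            rw [val_succ hi, val_succ hj] at this
            omega))
        · rw [map_zero]


def S : Module.End k (V k μ) :=
  ∑ i ∈ Finset.univ.filter (fun i : Fin μ => (i : ℕ) + 1 < μ), Proj k i

lemma proj_S (i : Fin μ) (hi : (i : ℕ) + 1 < μ) : Proj k i * S k = Proj k i := by
  rw [S, Finset.mul_sum]
  rw [Finset.sum_eq_single i]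
  · rw [proj_orth k i i hi hi, if_pos rfl]
  · intro j hj hji
    rw [Finset.mem_filter] at hj
    rw [proj_orth k i j hi hj.2, if_neg (fun h => hji h.symm)]
  · intro h
    exact absurd (Finset.mem_filter.mpr ⟨Finset.mem_univ i, hi⟩) h

lemma S_proj (j : Fin μ) (hj : (j : ℕ) + 1 < μ) : S k * Proj k j = Proj k j := by
  rw [S, Finset.sum_mul]
  rw [Finset.sum_eq_single j]
  · rw [proj_orth k j j hj hj, if_pos rfl]
  · intro i hi hij
    rw [Finset.mem_filter] at hi
    rw [proj_orth k i j hi.2 hj, if_neg hij]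
  · intro h
    exact absurd (Finset.mem_filter.mpr ⟨Finset.mem_univ j, hj⟩) h

lemma S_S : S k (μ := μ) * S k = S k := by
  conv_lhs => rw [S, Finset.sum_mul]
  rw [S]
  refine Finset.sum_congr rfl fun i hi => ?_
  rw [Finset.mem_filter] at hi
  exact proj_S k i hi.2

def Pop (j : Fin μ) : Module.End k (V k μ) :=
  if (j : ℕ) + 1 < μ then Proj k j else 1 - S k

lemma pop_orth (i j : Fin μ) :
    Pop k i * Pop k j = if i = j then Pop k i else 0 := by
  by_cases hi : (i : ℕ) + 1 < μ <;> by_cases hj : (j : ℕ) + 1 < μ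
  · simp only [Pop, if_pos hi, if_pos hj]
    exact proj_orth k i j hi hj
  · have hij : i ≠ j := fun h => hj (h ▸ hi)
    simp only [Pop, if_pos hi, if_neg hj, if_neg hij]
    have hP : ∀ x, Proj k i (S k x) = Proj k i x := fun x => by
      simpa [Module.End.mul_apply] using DFunLike.congr_fun (proj_S k i hi) x
    refine LinearMap.ext fun x => ?_
    simp [Module.End.mul_apply, LinearMap.sub_apply, Module.End.one_apply, map_sub, hP]
  · have hij : i ≠ j := fun h => hi (h ▸ hj)
    simp only [Pop, if_neg hi, if_pos hj, if_neg hij]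
    have hQ : ∀ x, S k (Proj k j x) = Proj k j x := fun x => by
      simpa [Module.End.mul_apply] using DFunLike.congr_fun (S_proj k j hj) x
    refine LinearMap.ext fun x => ?_
    simp [Module.End.mul_apply, LinearMap.sub_apply, Module.End.one_apply, hQ]
  · have hij : i = j := by
      have h1 := i.isLt
      have h2 := j.isLt
      exact Fin.ext (by omega)
    simp only [Pop, if_neg hi, if_neg hj, if_pos hij]
    have hS : ∀ x, S k (S k x) = S k x := fun x => by
      simpa [Module.End.mul_apply] using DFunLike.congr_fun (S_S k (μ := μ)) x
    refine LinearMap.ext fun x => ?_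
    simp [Module.End.mul_apply, LinearMap.sub_apply, Module.End.one_apply, map_sub, hS]

lemma pop_sum : ∑ j : Fin μ, Pop k j = 1 := by
  have hμ : 0 < μ := Nat.pos_of_ne_zero (NeZero.ne μ)
  rw [← Finset.sum_filter_add_sum_filter_not Finset.univ (fun j : Fin μ => (j : ℕ) + 1 < μ)]
  have h1 : ∑ j ∈ Finset.univ.filter (fun j : Fin μ => (j : ℕ) + 1 < μ), Pop k j = S k := by
    rw [S]
    refine Finset.sum_congr rfl fun j hj => ?_
    rw [Finset.mem_filter] at hj
    rw [Pop, if_pos hj.2]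
  have h2 : Finset.univ.filter (fun j : Fin μ => ¬((j : ℕ) + 1 < μ)) = {⟨μ - 1, by omega⟩} := by
    ext j
    simp only [Finset.mem_filter, Finset.mem_univ, true_and, Finset.mem_singleton, Fin.ext_iff]
    have := j.isLt
    omega
  rw [h1, h2, Finset.sum_singleton, Pop, if_neg (by simp; omega)]
  refine LinearMap.ext fun x => ?_
  simp [LinearMap.add_apply, LinearMap.sub_apply, Module.End.one_apply]


def ok (u : List (Fin μ)) : Prop := u = [] ∨ ∃ v, u = 0 :: v

lemma code_cons (a : Fin μ) : ∃ t, code a = 0 :: t := by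
  unfold code
  split_ifs
  · exact ⟨[], rfl⟩
  · exact ⟨[a], rfl⟩

lemma ok_flat (l u : List (Fin μ)) (hu : ok u) : ok (l.flatMap code ++ u) := by
  cases l with
  | nil => simpa using hu
  | cons b l' =>
    right
    obtain ⟨t, ht⟩ := code_cons (μ := μ) b
    exact ⟨t ++ l'.flatMap code ++ u, by simp [ht]⟩

def decode : List (Fin μ) → List (Fin μ)
  | [] => []
  | [_] => [0]
  | _ :: b :: rest => if (b : ℕ) = 0 then 0 :: decode (b :: rest) else b :: decode rest

lemma decode_flat : ∀ l : List (Fin μ), decode (l.flatMap code) = l := by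
  intro l
  induction l with
  | nil => simp [decode]
  | cons a l ih =>
    by_cases ha : (a : ℕ) = 0
    · have ha' : a = 0 := Fin.ext (by simpa using ha)
      subst ha'
      rw [List.flatMap_cons, show code (0 : Fin μ) = [0] from if_pos (by simp)]
      cases l with
      | nil => simp [decode]
      | cons b l' =>
        obtain ⟨t, ht⟩ := code_cons (μ := μ) b
        have hflat : (b :: l').flatMap code = 0 :: (t ++ l'.flatMap code) := by
          simp [List.flatMap_cons, ht]
        rw [hflat] at ih ⊢
        show decode (0 :: 0 :: (t ++ l'.flatMap code)) = 0 :: b :: l'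
        rw [show decode (0 :: 0 :: (t ++ l'.flatMap code))
            = if ((0 : Fin μ) : ℕ) = 0 then 0 :: decode (0 :: (t ++ l'.flatMap code))
              else (0 : Fin μ) :: decode (t ++ l'.flatMap code) from rfl]
        rw [if_pos (by simp), ih]
    · rw [List.flatMap_cons, show code a = [0, a] from if_neg ha]
      show decode (0 :: a :: l.flatMap code) = a :: l
      rw [show decode (0 :: a :: l.flatMap code)
          = if (a : ℕ) = 0 then 0 :: decode (a :: l.flatMap code)
            else a :: decode (l.flatMap code) from rfl]
      rw [if_neg ha, ih]

lemma flat_inj : Function.Injective (fun l : List (Fin μ) => l.flatMap code) := by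
  intro l1 l2 h
  have h1 := decode_flat (μ := μ) l1
  have h2 := decode_flat (μ := μ) l2
  rw [show l1.flatMap code = l2.flatMap code from h] at h1
  rw [h2] at h1
  exact h1.symm

def gen2 (i : Fin μ) : Module.End k (V k μ) :=
  if (i : ℕ) = 0 then Zop k
  else Zop k * Proj k ⟨(i : ℕ) - 1, Nat.lt_of_le_of_lt (Nat.sub_le _ _) i.isLt⟩

lemma gen2_bb (a : Fin μ) (u : List (Fin μ)) (hu : ok u) :
    gen2 k a (bb k u) = bb k (code a ++ u) := by
  by_cases ha : (a : ℕ) = 0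
  · have ha' : a = 0 := Fin.ext (by simpa using ha)
    rw [gen2, if_pos ha, Zop_bb, code, if_pos ha]
    rfl
  · rw [gen2, if_neg ha, Module.End.mul_apply]
    have hlt : (a : ℕ) - 1 < μ := Nat.lt_of_le_of_lt (Nat.sub_le _ _) a.isLt
    set j : Fin μ := ⟨(a : ℕ) - 1, hlt⟩ with hj
    have hj2 : (j : ℕ) + 1 < μ := by
      have := a.isLt
      simp only [hj]
      omega
    have hj1 : (j + 1 : Fin μ) = a := by
      refine Fin.ext ?_
      rw [val_succ hj2]
      simp only [hj]
      omega
    rcases hu with rfl | ⟨v, rfl⟩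
    · rw [Proj_bb_nil k j, hj1, Zop_bb]
      simp [code, ha]
    · rw [Proj_bb_zero k j, hj1, Zop_bb]
      simp [code, ha]

lemma key (ψ : FreeAlgebra k (Fin μ) →ₐ[k] Module.End k (V k μ))
    (hgen : ∀ i, ψ (FreeAlgebra.ι k i) = gen2 k i) :
    ∀ l u : List (Fin μ), ok u →
      ψ (FreeMonoid.lift (FreeAlgebra.ι k) (FreeMonoid.ofList l)) (bb k u)
        = bb k (l.flatMap code ++ u) := by
  intro l
  induction l with
  | nil =>
    intro u hu
    rw [FreeMonoid.ofList_nil, map_one, map_one, Module.End.one_apply]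
    simp
  | cons a l ih =>
    intro u hu
    rw [FreeMonoid.ofList_cons, map_mul, map_mul, Module.End.mul_apply, ih u hu,
      FreeMonoid.lift_eval_of, hgen a, gen2_bb k a _ (ok_flat l u hu)]
    simp


lemma inj_of_gen (ψ : FreeAlgebra k (Fin μ) →ₐ[k] Module.End k (V k μ))
    (hgen : ∀ i, ψ (FreeAlgebra.ι k i) = gen2 k i) : Function.Injective ψ := by
  classical
  set enc : FreeMonoid (Fin μ) → List (Fin μ) := fun w => (FreeMonoid.toList w).flatMap code
    with henc
  have hencinj : Function.Injective enc := by
    intro w1 w2 h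
    have h2 : FreeMonoid.toList w1 = FreeMonoid.toList w2 := flat_inj h
    have h3 := congrArg FreeMonoid.ofList h2
    rwa [FreeMonoid.ofList_toList, FreeMonoid.ofList_toList] at h3
  let e := FreeAlgebra.equivMonoidAlgebraFreeMonoid (R := k) (X := Fin μ)
  have hsym : ∀ w : FreeMonoid (Fin μ),
      e.symm (MonoidAlgebra.single w (1 : k)) = FreeMonoid.lift (FreeAlgebra.ι k) w := by
    intro w
    show (MonoidAlgebra.lift k (FreeAlgebra k (Fin μ)) (FreeMonoid (Fin μ))
        (FreeMonoid.lift (FreeAlgebra.ι k))) (MonoidAlgebra.single w 1) = _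
    rw [MonoidAlgebra.lift_single, one_smul]
  have hE : ∀ p : MonoidAlgebra k (FreeMonoid (Fin μ)),
      ψ (e.symm p) (bb k []) = Finsupp.mapDomain enc p.coeff := by
    intro p
    induction p using MonoidAlgebra.induction_linear with
    | zero => simp
    | add f g hf hg =>
      rw [map_add, map_add, LinearMap.add_apply, hf, hg, MonoidAlgebra.coeff_add, Finsupp.mapDomain_add]
    | single w c =>
      have h1 : (MonoidAlgebra.single w c : MonoidAlgebra k (FreeMonoid (Fin μ)))
          = c • MonoidAlgebra.single w (1 : k) := by
        rw [MonoidAlgebra.smul_single, smul_eq_mul, mul_one]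
      rw [h1, map_smul, map_smul, LinearMap.smul_apply, hsym w]
      have h2 := key k ψ hgen (FreeMonoid.toList w) [] (Or.inl rfl)
      rw [FreeMonoid.ofList_toList] at h2
      rw [h2, ← h1, MonoidAlgebra.coeff_single, Finsupp.mapDomain_single]
      simp [bb, Finsupp.smul_single, henc]
  intro p q hpq
  have h3 : Finsupp.mapDomain enc (e p).coeff = Finsupp.mapDomain enc (e q).coeff := by
    rw [← hE (e p), ← hE (e q), AlgEquiv.symm_apply_apply, AlgEquiv.symm_apply_apply, hpq]
  exact e.injective (MonoidAlgebra.coeff_injective (Finsupp.mapDomain_injective hencinj h3))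

end FarberAux

end

/-- the elements `z̄, z̄π̄_1, …, z̄π̄_{μ-1}` generate a free subalgebra
of `P_μ`: the algebra homomorphism from the free algebra on `μ` generators sending
`y_1 ↦ z̄` and `y_{j+1} ↦ z̄·π̄_j` (for `1 ≤ j ≤ μ - 1`) is injective. -/



theorem freeSubalgebra_z_zpi (k : Type*) [Field k] (μ : ℕ) (hμ : 1 ≤ μ) :
    Function.Injective
      (FreeAlgebra.lift k (fun i : Fin μ =>
        if hi : (i : ℕ) = 0 then zbar k μ
        else zbar k μ * pibar k μ ⟨(i : ℕ) - 1, by omega⟩) :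
        FreeAlgebra k (Fin μ) →ₐ[k] Pmu k μ) := by
  haveI : NeZero μ := ⟨by omega⟩
  have hrel : ∀ ⦃x y⦄, PmuRel k μ x y →
      (FreeAlgebra.lift k (fun o : Option (Fin μ) =>
        o.elim (FarberAux.Zop k) (FarberAux.Pop k))) x
      = (FreeAlgebra.lift k (fun o : Option (Fin μ) =>
        o.elim (FarberAux.Zop k) (FarberAux.Pop k))) y := by
    intro x y h
    cases h with
    | proj i j =>
      rw [map_mul, FreeAlgebra.lift_ι_apply, FreeAlgebra.lift_ι_apply]
      show FarberAux.Pop k i * FarberAux.Pop k j = _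
      rw [FarberAux.pop_orth k i j]
      split_ifs with hij
      · rw [FreeAlgebra.lift_ι_apply]
        rfl
      · rw [map_zero]
    | sum =>
      rw [map_sum, map_one]
      simp only [FreeAlgebra.lift_ι_apply]
      exact FarberAux.pop_sum k
  have hφz : (RingQuot.liftAlgHom k ⟨_, hrel⟩) (zbar k μ) = FarberAux.Zop k := by
    rw [zbar, RingQuot.liftAlgHom_mkAlgHom_apply, FreeAlgebra.lift_ι_apply]
    rfl
  have hφp : ∀ i : Fin μ,
      (RingQuot.liftAlgHom k ⟨_, hrel⟩) (pibar k μ i) = FarberAux.Pop k i := fun i => by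
    rw [pibar, RingQuot.liftAlgHom_mkAlgHom_apply, FreeAlgebra.lift_ι_apply]
    rfl
  have hgen : ∀ i : Fin μ,
      ((RingQuot.liftAlgHom k ⟨_, hrel⟩).comp (FreeAlgebra.lift k (fun i : Fin μ =>
        if hi : (i : ℕ) = 0 then zbar k μ
        else zbar k μ * pibar k μ ⟨(i : ℕ) - 1, by omega⟩)))
        (FreeAlgebra.ι k i) = FarberAux.gen2 k i := by
    intro i
    rw [AlgHom.comp_apply, FreeAlgebra.lift_ι_apply]
    by_cases hi : (i : ℕ) = 0
    · rw [dif_pos hi, hφz, FarberAux.gen2, if_pos hi]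
    · rw [dif_neg hi, map_mul, hφz, hφp, FarberAux.gen2, if_neg hi]
      congr 1
      have hc : (i : ℕ) - 1 + 1 < μ := by omega
      simp only [FarberAux.Pop]
      rw [if_pos hc]
  have hinj := FarberAux.inj_of_gen k _ hgen
  intro a b hab
  exact hinj (by
    rw [AlgHom.comp_apply, AlgHom.comp_apply]
    exact congrArg _ hab)
end

section
/- Let M be a left Λ-module such that β_M is bijective. Then the maps π_1, …, π_μ and z satisfy: π_i ∘ π_j = 0 for i ≠ j, π_i ∘ π_i = π_i for every i, π_1 + ⋯ + π_μ = id_M, and z(π_i(m)) = (β_M^{-1}m)_i for every m ∈ M and every i. (Thus these operations make every such module into a P_μ-module.) -/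
noncomputable section

variable (k : Type*) [Field k] (μ : ℕ)

/-- The group algebra `Λ = k[F_μ]` of the free group on `μ` generators. -/
abbrev Lam := MonoidAlgebra k (FreeGroup (Fin μ))

/-- The generator `g_i` of the free group, viewed inside `Λ`. -/
def gel (i : Fin μ) : Lam k μ := MonoidAlgebra.of k (FreeGroup (Fin μ)) (FreeGroup.of i)

variable {M : Type*} [AddCommGroup M] [Module (Lam k μ) M]

/-- The map `β_M : M^μ → M`, `(m_1, …, m_μ) ↦ ∑ (g_i - 1)·m_i`. -/
def betaM : (Fin μ → M) → M := fun m => ∑ i, (gel k μ i - 1) • m i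

/-- The inverse of `β_M`, when `β_M` is bijective. -/
def betaInv (hβ : Function.Bijective (betaM k μ (M := M))) : M → (Fin μ → M) :=
  (Equiv.ofBijective _ hβ).symm

/-- The operator `π_i : M → M`, `π_i(m) = (g_i - 1)·(β_M⁻¹ m)_i`. -/
def piMap (hβ : Function.Bijective (betaM k μ (M := M))) (i : Fin μ) : M → M :=
  fun m => (gel k μ i - 1) • betaInv k μ hβ m i

/-- The operator `z : M → M`, `z(m) = ∑ (β_M⁻¹ m)_i`. -/
def zMap (hβ : Function.Bijective (betaM k μ (M := M))) : M → M :=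
  fun m => ∑ i, betaInv k μ hβ m i

end

lemma betaM_single (k : Type*) [Field k] (μ : ℕ)
    {M : Type*} [AddCommGroup M] [Module (Lam k μ) M] (i : Fin μ) (x : M) :
    betaM k μ (Pi.single i x) = (gel k μ i - 1) • x := by
  unfold betaM
  rw [Finset.sum_eq_single i]
  · simp
  · intro j _ hj
    simp [Pi.single_eq_of_ne hj]
  · simp

lemma betaInv_single (k : Type*) [Field k] (μ : ℕ)
    {M : Type*} [AddCommGroup M] [Module (Lam k μ) M]
    (hβ : Function.Bijective (betaM k μ (M := M))) (i : Fin μ) (x : M) :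
    betaInv k μ hβ ((gel k μ i - 1) • x) = Pi.single i x := by
  apply hβ.injective
  have h : betaM k μ (betaInv k μ hβ ((gel k μ i - 1) • x)) = (gel k μ i - 1) • x :=
    (Equiv.ofBijective _ hβ).apply_symm_apply _
  rw [h, betaM_single]

/-- if `β_M` is bijective then the operators `π_1, …, π_μ, z` satisfy
`π_i ∘ π_j = 0` for `i ≠ j`, `π_i ∘ π_i = π_i`, `π_1 + ⋯ + π_μ = id`, and
`z(π_i(m)) = (β_M⁻¹ m)_i`; thus every such module is a `P_μ`-module. -/
theorem link_module_pmu_structure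
    (k : Type*) [Field k] (μ : ℕ) (hμ : 1 ≤ μ)
    (M : Type*) [AddCommGroup M] [Module (Lam k μ) M]
    (hβ : Function.Bijective (betaM k μ (M := M))) :
    (∀ i j : Fin μ, i ≠ j → ∀ m : M, piMap k μ hβ i (piMap k μ hβ j m) = 0) ∧
      (∀ (i : Fin μ) (m : M), piMap k μ hβ i (piMap k μ hβ i m) = piMap k μ hβ i m) ∧
      (∀ m : M, ∑ i : Fin μ, piMap k μ hβ i m = m) ∧
      (∀ (m : M) (i : Fin μ), zMap k μ hβ (piMap k μ hβ i m) = betaInv k μ hβ m i) := by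
  refine ⟨?_, ?_, ?_, ?_⟩
  · intro i j hij m
    simp [piMap, betaInv_single, Pi.single_eq_of_ne hij]
  · intro i m
    simp [piMap, betaInv_single]
  · intro m
    have : ∑ i, piMap k μ hβ i m = betaM k μ (betaInv k μ hβ m) := rfl
    rw [this]
    exact (Equiv.ofBijective _ hβ).apply_symm_apply m
  · intro m i
    simp [zMap, piMap, betaInv_single, Finset.sum_eq_single i,
      Pi.single_eq_of_ne]
end

section
/- Let M be a finitely generated left Λ-module such that β_M is bijective. Then the intersection of all lattices of M is itself a lattice; in particular M possesses a smallest lattice, contained in every lattice. -/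
set_option linter.unusedSectionVars false

noncomputable section

variable (k : Type*) [Field k] (μ : ℕ)
variable (M : Type*) [AddCommGroup M] [Module k M] [Module (Lam k μ) M]
  [IsScalarTower k (Lam k μ) M]

/-- A lattice in a `Λ`-module `M` (with `β_M` bijective): a finite-dimensional
`k`-subspace invariant under the `π_i` and `z` which generates `M` over `Λ`. -/
def IsLattice (hβ : Function.Bijective (betaM k μ (M := M))) (A : Submodule k M) : Prop :=
  FiniteDimensional k A ∧
    (∀ i : Fin μ, ∀ x ∈ A, piMap k μ hβ i x ∈ A) ∧
    (∀ x ∈ A, zMap k μ hβ x ∈ A) ∧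
    Submodule.span (Lam k μ) (A : Set M) = ⊤

end

noncomputable section ML

namespace ML

open Submodule

variable {k : Type*} [Field k] {μ : ℕ}

variable (k) in
/-- a group element viewed in `Λ`. -/
def gof (γ : FreeGroup (Fin μ)) : Lam k μ := MonoidAlgebra.of k (FreeGroup (Fin μ)) γ

lemma gof_mul (γ δ : FreeGroup (Fin μ)) : (gof k (γ * δ) : Lam k μ) = gof k γ * gof k δ :=
  map_mul (MonoidAlgebra.of k (FreeGroup (Fin μ))) γ δ

lemma gof_one : (gof k 1 : Lam k μ) = 1 := map_one (MonoidAlgebra.of k (FreeGroup (Fin μ)))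

lemma gel_eq_gof (i : Fin μ) : gel k μ i = gof k (FreeGroup.of i) := rfl

variable {M : Type*} [AddCommGroup M] [Module k M] [Module (Lam k μ) M]
  [IsScalarTower k (Lam k μ) M]

instance : SMulCommClass k (Lam k μ) M where
  smul_comm c l m := by
    rw [← algebraMap_smul (Lam k μ) c m, ← mul_smul, ← Algebra.commutes, mul_smul,
      algebraMap_smul (Lam k μ) c (l • m)]

variable (hβ : Function.Bijective (betaM k μ (M := M)))

lemma betaM_apply (x : Fin μ → M) : betaM k μ x = ∑ i, (gel k μ i - 1) • x i := rfl

lemma betaM_add (x y : Fin μ → M) : betaM k μ (x + y) = betaM k μ x + betaM k μ y := by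
  simp [betaM, smul_add, Finset.sum_add_distrib]

lemma betaM_smul (c : k) (x : Fin μ → M) : betaM k μ (c • x) = c • betaM k μ x := by
  simp [betaM, Finset.smul_sum, smul_comm c]

lemma betaM_betaInv (m : M) : betaM k μ (betaInv k μ hβ m) = m :=
  (Equiv.ofBijective _ hβ).apply_symm_apply m

lemma betaInv_betaM (x : Fin μ → M) : betaInv k μ hβ (betaM k μ x) = x :=
  (Equiv.ofBijective _ hβ).symm_apply_apply x

lemma betaInv_add (m n : M) :
    betaInv k μ hβ (m + n) = betaInv k μ hβ m + betaInv k μ hβ n := by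
  apply hβ.injective
  show betaM k μ _ = betaM k μ _
  rw [betaM_add, betaM_betaInv, betaM_betaInv, betaM_betaInv]

lemma betaInv_smul (c : k) (m : M) :
    betaInv k μ hβ (c • m) = c • betaInv k μ hβ m := by
  apply hβ.injective
  show betaM k μ _ = betaM k μ _
  rw [betaM_smul, betaM_betaInv, betaM_betaInv]

/-- `θ_j : M → M` as a `k`-linear map, `θ_j = (β⁻¹ ·)_j`. -/
def th (j : Fin μ) : M →ₗ[k] M where
  toFun m := betaInv k μ hβ m j
  map_add' m n := by show betaInv k μ hβ (m + n) j = _; rw [betaInv_add]; rfl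
  map_smul' c m := by show betaInv k μ hβ (c • m) j = _; rw [betaInv_smul]; rfl

lemma sum_th (m : M) : ∑ j, (gel k μ j - 1) • th hβ j m = m := betaM_betaInv hβ m

lemma th_betaM (x : Fin μ → M) (j : Fin μ) : th hβ j (betaM k μ x) = x j :=
  congrFun (betaInv_betaM hβ x) j

lemma th_single (i j : Fin μ) (x : M) :
    th hβ j ((gel k μ i - 1) • x) = (Pi.single i x : Fin μ → M) j := by
  have : (gel k μ i - 1) • x = betaM k μ (Pi.single i x : Fin μ → M) := by
    rw [betaM_apply, Finset.sum_eq_single i]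
    · rw [Pi.single_eq_same]
    · intro b _ hb; rw [Pi.single_eq_of_ne hb, smul_zero]
    · intro h; exact absurd (Finset.mem_univ i) h
  rw [this, th_betaM]

lemma zMap_piMap (j : Fin μ) (x : M) : zMap k μ hβ (piMap k μ hβ j x) = th hβ j x := by
  show ∑ i, th hβ i ((gel k μ j - 1) • th hβ j x) = th hβ j x
  simp only [th_single]
  rw [Finset.sum_pi_single' j (th hβ j x) Finset.univ, if_pos (Finset.mem_univ j)]

lemma piMap_eq (j : Fin μ) (x : M) : piMap k μ hβ j x = (gel k μ j - 1) • th hβ j x := rfl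

lemma zMap_eq (x : M) : zMap k μ hβ x = ∑ i, th hβ i x := rfl

/-! ### Fox derivatives -/

variable (k μ) in
/-- Carrier for the Fox-derivative construction: pairs `(g, d)` with
multiplication `(g,d)*(g',d') = (g g', d g' + d')`. -/
@[ext] structure Der where
  g : Lam k μ
  d : Lam k μ

instance : One (Der k μ) := ⟨⟨1, 0⟩⟩
instance : Mul (Der k μ) := ⟨fun a b => ⟨a.g * b.g, a.d * b.g + b.d⟩⟩

lemma Der.mul_def (a b : Der k μ) : a * b = ⟨a.g * b.g, a.d * b.g + b.d⟩ := rfl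
lemma Der.one_def : (1 : Der k μ) = ⟨1, 0⟩ := rfl

instance : Monoid (Der k μ) where
  mul_assoc a b c := by
    simp only [Der.mul_def]; congr 1 <;> noncomm_ring
  one_mul a := by simp only [Der.mul_def, Der.one_def, one_mul, mul_one, zero_mul, zero_add]
  mul_one a := by simp only [Der.mul_def, Der.one_def, one_mul, mul_one, add_zero]

/-- The unit of `Der` corresponding to the generator `g_i`, with `d`-component
`δ_{ij}`. -/
def derUnit (j i : Fin μ) : (Der k μ)ˣ where
  val := ⟨gof k (FreeGroup.of i), if i = j then 1 else 0⟩
  inv := ⟨gof k ((FreeGroup.of i)⁻¹), -((if i = j then 1 else 0) * gof k ((FreeGroup.of i)⁻¹))⟩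
  val_inv := by
    simp only [Der.mul_def, ← gof_mul, mul_inv_cancel, gof_one, Der.one_def]
    congr 1
    rw [add_neg_cancel]
  inv_val := by
    simp only [Der.mul_def, ← gof_mul, inv_mul_cancel, gof_one, Der.one_def]
    congr 1
    rw [neg_mul, mul_assoc, ← gof_mul, inv_mul_cancel, gof_one, mul_one, neg_add_cancel]

/-- The homomorphism from the free group computing Fox derivatives. -/
def derHom (j : Fin μ) : FreeGroup (Fin μ) →* (Der k μ)ˣ :=
  FreeGroup.lift (derUnit j)

variable (k) in
/-- The (right-handed) Fox derivative `D_j : F_μ → Λ`. -/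
def D (j : Fin μ) (γ : FreeGroup (Fin μ)) : Lam k μ :=
  (((derHom j γ : (Der k μ)ˣ) : Der k μ)).d

lemma derHom_of (j i : Fin μ) : (derHom j (FreeGroup.of i) : (Der k μ)ˣ) = derUnit j i :=
  FreeGroup.lift_apply_of

lemma derHom_g (j : Fin μ) (γ : FreeGroup (Fin μ)) :
    (((derHom j γ : (Der k μ)ˣ) : Der k μ)).g = gof k γ := by
  induction γ using FreeGroup.induction_on with
  | C1 => rw [map_one]; exact (gof_one).symm
  | of x => rw [derHom_of]; rfl
  | inv_of x _ =>
      rw [map_inv, derHom_of]; rfl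
  | mul x y hx hy =>
      rw [map_mul, Units.val_mul, gof_mul, ← hx, ← hy]; rfl

lemma D_one (j : Fin μ) : D k j (1 : FreeGroup (Fin μ)) = 0 := by
  rw [D, map_one]; rfl

lemma D_mul (j : Fin μ) (u v : FreeGroup (Fin μ)) :
    D k j (u * v) = D k j u * gof k v + D k j v := by
  rw [D, map_mul, Units.val_mul, ← derHom_g j v]; rfl

lemma D_of (j i : Fin μ) : D k j (FreeGroup.of i) = if i = j then 1 else 0 := by
  rw [D, derHom_of]; rfl

lemma D_inv_of (j i : Fin μ) :
    D k j ((FreeGroup.of i)⁻¹) =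
      -((if i = j then 1 else 0) * gof k ((FreeGroup.of i)⁻¹)) := by
  rw [D, map_inv, derHom_of]; rfl

/-- Fundamental identity of Fox calculus. -/
lemma fox (γ : FreeGroup (Fin μ)) :
    (gof k γ : Lam k μ) - 1 = ∑ i, (gel k μ i - 1) * D k i γ := by
  induction γ using FreeGroup.induction_on with
  | C1 => simp [gof_one, D_one]
  | of x =>
      rw [Finset.sum_eq_single x]
      · rw [D_of, if_pos rfl, mul_one, gel_eq_gof]
      · intro b _ hb
        rw [D_of, if_neg (Ne.symm hb), mul_zero]
      · intro h; exact absurd (Finset.mem_univ x) h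
  | inv_of x _ =>
      rw [Finset.sum_eq_single x]
      · rw [D_inv_of, if_pos rfl, one_mul, gel_eq_gof, mul_neg, sub_mul, one_mul,
          ← gof_mul, mul_inv_cancel, gof_one, neg_sub]
      · intro b _ hb
        rw [D_inv_of, if_neg (Ne.symm hb), zero_mul, neg_zero, mul_zero]
      · intro h; exact absurd (Finset.mem_univ x) h
  | mul x y hx hy =>
      calc (gof k (x * y) : Lam k μ) - 1
          = ((gof k x : Lam k μ) - 1) * gof k y + (gof k y - 1) := by
            rw [gof_mul]; noncomm_ring
        _ = ∑ i, (gel k μ i - 1) * D k i (x * y) := by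
            rw [hx, hy, Finset.sum_mul, ← Finset.sum_add_distrib]
            refine Finset.sum_congr rfl fun i _ => ?_
            rw [D_mul]; noncomm_ring

/-- The key formula: `θ_j (γ • m) = θ_j m + D_j(γ) • m`. -/
lemma th_gof_smul (j : Fin μ) (γ : FreeGroup (Fin μ)) (m : M) :
    th hβ j (gof k γ • m) = th hβ j m + D k j γ • m := by
  have h : gof k γ • m = betaM k μ (fun i => th hβ i m + D k i γ • m) := by
    rw [betaM_apply]
    have h2 : ∀ i ∈ Finset.univ, (gel k μ i - 1) • (th hβ i m + D k i γ • m) =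
        (gel k μ i - 1) • th hβ i m + ((gel k μ i - 1) * D k i γ) • m := by
      intro i _; rw [smul_add, mul_smul]
    rw [Finset.sum_congr rfl h2, Finset.sum_add_distrib, sum_th, ← Finset.sum_smul, ← fox]
    rw [sub_smul, one_smul]
    abel
  rw [h, th_betaM]

/-! ### Words and length filtration -/

lemma mk_cons (s : Fin μ × Bool) (l : List (Fin μ × Bool)) :
    FreeGroup.mk (s :: l) = FreeGroup.mk [s] * FreeGroup.mk l := by
  rw [FreeGroup.mul_mk]; rfl

lemma mk_single_true (i : Fin μ) : FreeGroup.mk [(i, true)] = FreeGroup.of i := rfl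

lemma mk_single_false (i : Fin μ) : FreeGroup.mk [(i, false)] = (FreeGroup.of i)⁻¹ := by
  rw [← mk_single_true, FreeGroup.inv_mk]
  simp [FreeGroup.invRev]

lemma mk_nil : (FreeGroup.mk ([] : List (Fin μ × Bool))) = 1 := rfl

variable (k μ) in
/-- The span of group elements of length at most `L`. -/
def VL (L : ℕ) : Submodule k (Lam k μ) :=
  Submodule.span k {x | ∃ l : List (Fin μ × Bool), l.length ≤ L ∧ x = gof k (FreeGroup.mk l)}

lemma mem_VL (l : List (Fin μ × Bool)) {L : ℕ} (h : l.length ≤ L) :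
    gof k (FreeGroup.mk l) ∈ VL k μ L :=
  Submodule.subset_span ⟨l, h, rfl⟩

lemma VL_mono {L L' : ℕ} (h : L ≤ L') : VL k μ L ≤ VL k μ L' :=
  Submodule.span_mono fun x ⟨l, hl, hx⟩ => ⟨l, hl.trans h, hx⟩

/-- Weak Fox-support bound: `D_j γ` lies in the span of words no longer than `γ`. -/
lemma K0 (j : Fin μ) : ∀ l : List (Fin μ × Bool), D k j (FreeGroup.mk l) ∈ VL k μ l.length := by
  intro l
  induction l with
  | nil => rw [mk_nil, D_one]; exact zero_mem _
  | cons s l₁ ih =>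
      obtain ⟨i, b⟩ := s
      rw [mk_cons, D_mul]
      refine add_mem ?_ (VL_mono (by simp) (ih))
      cases b with
      | true =>
          rw [mk_single_true, D_of]
          split
          · rw [one_mul]
            exact VL_mono (by simp) (mem_VL l₁ le_rfl)
          · rw [zero_mul]; exact zero_mem _
      | false =>
          rw [mk_single_false, D_inv_of]
          split
          · rw [one_mul, neg_mul, ← gof_mul, ← mk_single_false, ← mk_cons]
            exact neg_mem (mem_VL _ le_rfl)
          · rw [zero_mul, neg_zero, zero_mul]; exact zero_mem _

/-- Strong Fox-support bound: apart from a possible `-γ` top term (present only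
when the first letter of the word is an inverse generator `g_j⁻¹`), the Fox
derivative `D_j γ` consists of strictly shorter words. -/
lemma K1 (j : Fin μ) (l : List (Fin μ × Bool)) {L : ℕ} (h : l.length ≤ L + 1) :
    D k j (FreeGroup.mk l) +
      (if l.head? = some (j, false) then gof k (FreeGroup.mk l) else 0) ∈ VL k μ L := by
  cases l with
  | nil =>
      rw [mk_nil, D_one]
      simp only [List.head?_nil]
      norm_num
      exact zero_mem _
  | cons s l₁ =>
      obtain ⟨i, b⟩ := s
      have hl₁ : l₁.length ≤ L := by simpa using h
      rw [mk_cons, D_mul]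
      have hD1 : D k j (FreeGroup.mk l₁) ∈ VL k μ L := VL_mono hl₁ (K0 j l₁)
      cases b with
      | true =>
          rw [List.head?_cons, if_neg (by simp), add_zero]
          refine add_mem ?_ hD1
          rw [mk_single_true, D_of]
          split
          · rw [one_mul]; exact mem_VL l₁ hl₁
          · rw [zero_mul]; exact zero_mem _
      | false =>
          rw [mk_single_false, D_inv_of]
          by_cases hij : i = j
          · subst hij
            rw [List.head?_cons, if_pos rfl, if_pos rfl, one_mul, neg_mul, ← gof_mul,
              ← mk_single_false, ← mk_cons]
            set x := gof k (FreeGroup.mk ((i, false) :: l₁)) with hx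
            rwa [show -x + D k i (FreeGroup.mk l₁) + x = D k i (FreeGroup.mk l₁) from by abel]
          · rw [if_neg hij, List.head?_cons, if_neg (by simp [hij]), add_zero, zero_mul,
              neg_zero, zero_mul, zero_add]
            exact hD1

/-- Fox derivatives live in the span of the "tails" of the word. -/
lemma D_mem_span_drop (j : Fin μ) (l : List (Fin μ × Bool)) :
    D k j (FreeGroup.mk l) ∈
      Submodule.span k {x | ∃ q, x = gof k (FreeGroup.mk (l.drop q))} := by
  induction l with
  | nil => rw [mk_nil, D_one]; exact zero_mem _
  | cons s l₁ ih =>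
      obtain ⟨i, b⟩ := s
      rw [mk_cons, D_mul]
      refine add_mem ?_ ?_
      · cases b with
        | true =>
            rw [mk_single_true, D_of]
            split
            · rw [one_mul]
              exact Submodule.subset_span ⟨1, rfl⟩
            · rw [zero_mul]; exact zero_mem _
        | false =>
            rw [mk_single_false, D_inv_of]
            split
            · rw [one_mul, neg_mul, ← gof_mul, ← mk_single_false, ← mk_cons]
              exact neg_mem (Submodule.subset_span ⟨0, rfl⟩)
            · rw [zero_mul, neg_zero, zero_mul]; exact zero_mem _
      · refine Submodule.span_mono (fun x hx => ?_) ih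
        obtain ⟨q, hq⟩ := hx
        exact ⟨q + 1, hq⟩

/-! ### The filtration `VB B L` of `Λ·B` -/

variable (k μ) in
/-- The span of elements `γ • b` with `b ∈ B` and `γ` of length at most `L`. -/
def VB (B : Submodule k M) (L : ℕ) : Submodule k M :=
  Submodule.span k
    {x | ∃ l : List (Fin μ × Bool), l.length ≤ L ∧ ∃ b ∈ B, x = gof k (FreeGroup.mk l) • b}

lemma mem_VB {B : Submodule k M} {L : ℕ} (l : List (Fin μ × Bool)) (h : l.length ≤ L)
    {b : M} (hb : b ∈ B) : gof k (FreeGroup.mk l) • b ∈ VB k μ B L :=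
  Submodule.subset_span ⟨l, h, b, hb, rfl⟩

lemma VB_mono {B : Submodule k M} {L L' : ℕ} (h : L ≤ L') : VB k μ B L ≤ VB k μ B L' :=
  Submodule.span_mono fun x ⟨l, hl, b, hb, hx⟩ => ⟨l, hl.trans h, b, hb, hx⟩

lemma B_le_VB (B : Submodule k M) (L : ℕ) : B ≤ VB k μ B L := fun b hb => by
  have := mem_VB (B := B) (L := L) ([] : List (Fin μ × Bool)) (by simp) hb
  rwa [mk_nil, gof_one, one_smul] at this

lemma VB_zero_le (B : Submodule k M) : VB k μ B 0 ≤ B := by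
  rw [VB, Submodule.span_le]
  rintro x ⟨l, hl, b, hb, rfl⟩
  rw [List.length_eq_zero_iff.mp (Nat.le_zero.mp hl), mk_nil, gof_one, one_smul]
  exact hb

lemma VL_smul_mem {B : Submodule k M} {L : ℕ} {x : Lam k μ} (hx : x ∈ VL k μ L)
    {b : M} (hb : b ∈ B) : x • b ∈ VB k μ B L := by
  induction hx using Submodule.span_induction with
  | mem y hy => obtain ⟨l, hl, rfl⟩ := hy; exact mem_VB l hl hb
  | zero => rw [zero_smul]; exact zero_mem _
  | add y z _ _ hy hz => rw [add_smul]; exact add_mem hy hz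
  | smul c y _ hy => rw [smul_assoc]; exact Submodule.smul_mem _ _ hy

lemma th_VB {B : Submodule k M} (hB : ∀ j, ∀ b ∈ B, th hβ j b ∈ B) {L : ℕ} (j : Fin μ)
    {x : M} (hx : x ∈ VB k μ B L) : th hβ j x ∈ VB k μ B L := by
  induction hx using Submodule.span_induction with
  | mem y hy =>
      obtain ⟨l, hl, b, hb, rfl⟩ := hy
      rw [th_gof_smul]
      exact add_mem (B_le_VB B L (hB j b hb)) (VL_smul_mem (VL_mono hl (K0 j l)) hb)
  | zero => rw [map_zero]; exact zero_mem _
  | add y z _ _ hy hz => rw [map_add]; exact add_mem hy hz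
  | smul c y _ hy => rw [map_smul]; exact Submodule.smul_mem _ _ hy

lemma gof_smul_VB {B : Submodule k M} {L : ℕ} (γ : FreeGroup (Fin μ)) {x : M}
    (hx : x ∈ VB k μ B L) : gof k γ • x ∈ VB k μ B (L + γ.toWord.length) := by
  induction hx using Submodule.span_induction with
  | mem y hy =>
      obtain ⟨l, hl, b, hb, rfl⟩ := hy
      rw [smul_smul, ← gof_mul]
      have : γ * FreeGroup.mk l = FreeGroup.mk (γ.toWord ++ l) := by
        rw [← FreeGroup.mul_mk, FreeGroup.mk_toWord]
      rw [this]
      exact mem_VB _ (by rw [List.length_append]; omega) hb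
  | zero => rw [smul_zero]; exact zero_mem _
  | add y z _ _ hy hz => rw [smul_add]; exact add_mem hy hz
  | smul c y _ hy => rw [smul_comm]; exact Submodule.smul_mem _ _ hy

lemma exists_VB {B : Submodule k M} {m : M}
    (hm : m ∈ Submodule.span (Lam k μ) (B : Set M)) : ∃ L, m ∈ VB k μ B L := by
  induction hm using Submodule.span_induction with
  | mem y hy => exact ⟨0, B_le_VB B 0 hy⟩
  | zero => exact ⟨0, zero_mem _⟩
  | add y z _ _ hy hz =>
      obtain ⟨Ly, hy⟩ := hy; obtain ⟨Lz, hz⟩ := hz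
      exact ⟨max Ly Lz, add_mem (VB_mono (le_max_left _ _) hy)
        (VB_mono (le_max_right _ _) hz)⟩
  | smul lam y _ hy =>
      obtain ⟨L, hy⟩ := hy
      classical
      refine ⟨L + lam.coeff.support.sup (fun γ => γ.toWord.length), ?_⟩
      have hdec : lam • y = ∑ γ ∈ lam.coeff.support, (lam.coeff γ) • (gof k γ • y) := by
        conv_lhs => rw [← MonoidAlgebra.sum_coeff_single lam]
        rw [Finsupp.sum, Finset.sum_smul]
        refine Finset.sum_congr rfl fun γ _ => ?_
        have h1 : (MonoidAlgebra.single γ (lam.coeff γ) : Lam k μ) = (lam.coeff γ) • gof k γ := by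
          rw [gof, MonoidAlgebra.of_apply, MonoidAlgebra.smul_single,
            smul_eq_mul, mul_one]
        rw [h1, smul_assoc]
      rw [hdec]
      refine sum_mem fun γ hγ => Submodule.smul_mem _ _ ?_
      exact VB_mono (Nat.add_le_add_left (Finset.le_sup (f := fun γ : FreeGroup (Fin μ) => γ.toWord.length) hγ) L)
        (gof_smul_VB γ hy)

/-! ### The descent lemma -/

lemma decomp {B : Submodule k M} (hB : ∀ j, ∀ b ∈ B, th hβ j b ∈ B) {L : ℕ} {m : M}
    (hm : m ∈ VB k μ B (L + 1)) :
    ∃ x : Fin μ → M,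
      (∀ i j, i ≠ j → th hβ i (x j) ∈ VB k μ B L) ∧
      (∀ j, x j + th hβ j (x j) ∈ VB k μ B L) ∧
      (∀ i, th hβ i (m - ∑ j, x j) ∈ VB k μ B L) := by
  induction hm using Submodule.span_induction with
  | mem y hy =>
      obtain ⟨l, hl, b, hb, rfl⟩ := hy
      cases l with
      | nil =>
          refine ⟨0, fun i j _ => by simp, fun j => by simp, fun i => ?_⟩
          simp only [Pi.zero_apply, Finset.sum_const_zero, sub_zero, mk_nil, gof_one, one_smul]
          exact B_le_VB B L (hB i b hb)
      | cons s l₁ =>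
          obtain ⟨i₀, b₀⟩ := s
          have hl₁ : l₁.length ≤ L := by simpa using hl
          cases b₀ with
          | true =>
              refine ⟨0, fun i j _ => by simp, fun j => by simp, fun i => ?_⟩
              simp only [Pi.zero_apply, Finset.sum_const_zero, sub_zero]
              rw [th_gof_smul]
              refine add_mem (B_le_VB B L (hB i b hb)) (VL_smul_mem ?_ hb)
              have := K1 (k := k) i ((i₀, true) :: l₁) (by simpa using hl)
              rwa [List.head?_cons, if_neg (by simp), add_zero] at this
          | false =>
              refine ⟨Pi.single i₀ (gof k (FreeGroup.mk ((i₀, false) :: l₁)) • b), ?_, ?_, ?_⟩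
              · intro i j hij
                by_cases hj : j = i₀
                · subst hj
                  rw [Pi.single_eq_same, th_gof_smul]
                  refine add_mem (B_le_VB B L (hB i b hb)) (VL_smul_mem ?_ hb)
                  have hK := K1 (k := k) i ((j, false) :: l₁) (by simpa using hl)
                  rwa [List.head?_cons,
                    if_neg (by simpa using fun h : j = i => hij h.symm), add_zero] at hK
                · rw [Pi.single_eq_of_ne hj, map_zero]
                  exact zero_mem _
              · intro j
                by_cases hj : j = i₀
                · subst hj
                  rw [Pi.single_eq_same, th_gof_smul]
                  have e : gof k (FreeGroup.mk ((j, false) :: l₁)) • b +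
                      (th hβ j b + D k j (FreeGroup.mk ((j, false) :: l₁)) • b) =
                      th hβ j b + (D k j (FreeGroup.mk ((j, false) :: l₁)) +
                        gof k (FreeGroup.mk ((j, false) :: l₁))) • b := by
                    rw [add_smul]; abel
                  rw [e]
                  refine add_mem (B_le_VB B L (hB j b hb)) (VL_smul_mem ?_ hb)
                  have hK := K1 (k := k) j ((j, false) :: l₁) (by simpa using hl)
                  rwa [List.head?_cons, if_pos rfl] at hK
                · rw [Pi.single_eq_of_ne hj, map_zero, add_zero]
                  exact zero_mem _
              · intro i
                rw [Finset.sum_pi_single' i₀ _ Finset.univ, if_pos (Finset.mem_univ i₀),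
                  sub_self, map_zero]
                exact zero_mem _
  | zero =>
      refine ⟨0, fun i j _ => by simp, fun j => by simp, fun i => by simp⟩
  | add y z _ _ hy hz =>
      obtain ⟨x₁, h11, h12, h13⟩ := hy
      obtain ⟨x₂, h21, h22, h23⟩ := hz
      refine ⟨x₁ + x₂, ?_, ?_, ?_⟩
      · intro i j hij
        rw [Pi.add_apply, map_add]
        exact add_mem (h11 i j hij) (h21 i j hij)
      · intro j
        rw [Pi.add_apply, map_add,
          show x₁ j + x₂ j + (th hβ j (x₁ j) + th hβ j (x₂ j)) =
            (x₁ j + th hβ j (x₁ j)) + (x₂ j + th hβ j (x₂ j)) from by abel]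
        exact add_mem (h12 j) (h22 j)
      · intro i
        rw [show y + z - ∑ j, (x₁ + x₂) j = (y - ∑ j, x₁ j) + (z - ∑ j, x₂ j) from by
          simp only [Pi.add_apply, Finset.sum_add_distrib]; abel, map_add]
        exact add_mem (h13 i) (h23 i)
  | smul c y _ hy =>
      obtain ⟨x₁, h11, h12, h13⟩ := hy
      refine ⟨c • x₁, ?_, ?_, ?_⟩
      · intro i j hij
        rw [Pi.smul_apply, map_smul]
        exact Submodule.smul_mem _ _ (h11 i j hij)
      · intro j
        rw [Pi.smul_apply, map_smul, ← smul_add]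
        exact Submodule.smul_mem _ _ (h12 j)
      · intro i
        rw [show c • y - ∑ j, (c • x₁) j = c • (y - ∑ j, x₁ j) from by
          simp only [Pi.smul_apply, smul_sub, Finset.smul_sum], map_smul]
        exact Submodule.smul_mem _ _ (h13 i)

/-- The descent step: an element of `A` which lies in the length-`(L+1)` part of
`Λ·B` lies in the `Λ`-span of `A ⊓ B`. -/
lemma stepP {A B : Submodule k M} (hA : ∀ j, ∀ a ∈ A, th hβ j a ∈ A)
    (hB : ∀ j, ∀ b ∈ B, th hβ j b ∈ B) :
    ∀ L : ℕ, ∀ m ∈ A, m ∈ VB k μ B L →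
      m ∈ Submodule.span (Lam k μ) ((A ⊓ B : Submodule k M) : Set M) := by
  intro L
  induction L with
  | zero => exact fun m hmA hm => Submodule.subset_span ⟨hmA, VB_zero_le B hm⟩
  | succ L ih =>
      intro m hmA hm
      obtain ⟨x, hx1, hx2, hx3⟩ := decomp hβ hB hm
      have hy : ∀ j, th hβ j m + x j ∈ VB k μ B L := by
        intro j
        have h3 := hx3 j
        rw [map_sub, map_sum] at h3
        have e2 : th hβ j m + x j = ((th hβ j m - ∑ i, th hβ j (x i)) +
            ∑ i ∈ Finset.univ.erase j, th hβ j (x i)) + (x j + th hβ j (x j)) := by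
          rw [Finset.sum_erase_eq_sub (Finset.mem_univ j)]
          abel
        rw [e2]
        refine add_mem (add_mem h3 (sum_mem fun i hi => ?_)) (hx2 j)
        exact hx1 j i (Finset.ne_of_mem_erase hi).symm
      have hv : ∀ j, th hβ j m ∈ A := fun j => hA j m hmA
      -- θ_i θ_j m ∈ VB L for i ≠ j
      have hthth : ∀ i j, i ≠ j → th hβ i (th hβ j m) ∈ VB k μ B L := by
        intro i j hij
        have e : th hβ i (th hβ j m) =
            th hβ i (th hβ j m + x j) - th hβ i (x j) := by rw [map_add]; abel
        rw [e]
        exact sub_mem (th_VB hβ hB i (hy j)) (hx1 i j hij)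
      -- θ_j m + θ_j θ_j m ∈ VB L
      have hw : ∀ j, th hβ j m + th hβ j (th hβ j m) ∈ VB k μ B L := by
        intro j
        have e : th hβ j m + th hβ j (th hβ j m) =
            ((th hβ j m + x j) + th hβ j (th hβ j m + x j)) -
              (x j + th hβ j (x j)) := by rw [map_add]; abel
        rw [e]
        exact sub_mem (add_mem (hy j) (th_VB hβ hB j (hy j))) (hx2 j)
      -- main identity
      have key : ∀ j, gof k (FreeGroup.of j) • (th hβ j m) =
          (∑ i ∈ Finset.univ.erase j, (gel k μ i - 1) • th hβ i (th hβ j m)) +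
            (gel k μ j - 1) • (th hβ j m + th hβ j (th hβ j m)) := by
        intro j
        rw [Finset.sum_erase_eq_sub (Finset.mem_univ j), sum_th hβ (th hβ j m), smul_add,
          gel_eq_gof, sub_smul, one_smul, sub_smul, one_smul]
        abel
      have hvP : ∀ j, th hβ j m ∈
          Submodule.span (Lam k μ) ((A ⊓ B : Submodule k M) : Set M) := by
        intro j
        have h1 : gof k (FreeGroup.of j) • th hβ j m ∈
            Submodule.span (Lam k μ) ((A ⊓ B : Submodule k M) : Set M) := by
          rw [key j]
          refine add_mem (sum_mem fun i hi => Submodule.smul_mem _ _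
              (ih _ (hA i _ (hv j)) (hthth i j (Finset.ne_of_mem_erase hi)))) ?_
          exact Submodule.smul_mem _ _
            (ih _ (add_mem (hv j) (hA j _ (hv j))) (hw j))
        have h2 : th hβ j m =
            gof k ((FreeGroup.of j)⁻¹) • (gof k (FreeGroup.of j) • th hβ j m) := by
          rw [smul_smul, ← gof_mul, inv_mul_cancel, gof_one, one_smul]
        rw [h2]
        exact Submodule.smul_mem _ _ h1
      have hm' : m = ∑ j, (gel k μ j - 1) • th hβ j m := (sum_th hβ m).symm
      rw [hm']
      exact sum_mem fun j _ => Submodule.smul_mem _ _ (hvP j)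

/-- Main generation lemma: if `A`, `B` are `θ`-stable and `B` generates `M`
over `Λ`, then every element of `A` lies in the `Λ`-span of `A ⊓ B`. -/
lemma lemmaP {A B : Submodule k M} (hA : ∀ j, ∀ a ∈ A, th hβ j a ∈ A)
    (hB : ∀ j, ∀ b ∈ B, th hβ j b ∈ B)
    (hBgen : Submodule.span (Lam k μ) (B : Set M) = ⊤) :
    ∀ m ∈ A, m ∈ Submodule.span (Lam k μ) ((A ⊓ B : Submodule k M) : Set M) := by
  intro m hm
  obtain ⟨L, hL⟩ := exists_VB (B := B) (m := m) (by rw [hBgen]; trivial)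
  exact stepP hβ hA hB L m hm hL

/-! ### Lattices are θ-stable -/

lemma lattice_th {A : Submodule k M} (hA : IsLattice k μ M hβ A)
    (j : Fin μ) {x : M} (hx : x ∈ A) : th hβ j x ∈ A := by
  have h1 : piMap k μ hβ j x ∈ A := hA.2.1 j x hx
  have h2 := hA.2.2.1 _ h1
  rwa [zMap_piMap] at h2

/-- Decomposition of the action of `lam` as a sum over its support. -/
lemma smul_eq_sum_single (lam : Lam k μ) (y : M) :
    lam • y = ∑ γ ∈ lam.coeff.support, (lam.coeff γ) • (gof k γ • y) := by
  classical
  conv_lhs => rw [← MonoidAlgebra.sum_coeff_single lam]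
  rw [Finsupp.sum, Finset.sum_smul]
  refine Finset.sum_congr rfl fun γ _ => ?_
  have h1 : (MonoidAlgebra.single γ (lam.coeff γ) : Lam k μ) = (lam.coeff γ) • gof k γ := by
    rw [gof, MonoidAlgebra.of_apply, MonoidAlgebra.smul_single,
      smul_eq_mul, mul_one]
  rw [h1, smul_assoc]

/-! ### Existence of a lattice -/

lemma exists_lattice [Module.Finite (Lam k μ) M] :
    ∃ A : Submodule k M, IsLattice k μ M hβ A := by
  classical
  obtain ⟨s, hs⟩ : ∃ s : Finset M, Submodule.span (Lam k μ) (s : Set M) = ⊤ :=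
    Module.finite_def.mp inferInstance
  have hrep : ∀ (j : Fin μ) (a : M), ∃ f : M → Lam k μ, ∑ b ∈ s, f b • b = th hβ j a :=
    fun j a => (mem_span_finset.mp (by rw [hs]; trivial)).imp fun _ hf => hf.2
  choose c hc using hrep
  let base : Finset (List (Fin μ × Bool)) :=
    insert [] (Finset.univ.biUnion fun j : Fin μ => s.biUnion fun a => s.biUnion fun b =>
      (c j a b).coeff.support.image FreeGroup.toWord)
  let pairs : Finset (List (Fin μ × Bool)) :=
    base.biUnion fun w => (Finset.range (w.length + 1)).image fun q => w.drop q
  have hbase_pairs : ∀ w ∈ base, w ∈ pairs := fun w hw =>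
    Finset.mem_biUnion.mpr ⟨w, hw, Finset.mem_image.mpr
      ⟨0, Finset.mem_range.mpr (by omega), List.drop_zero (l := w)⟩⟩
  have hdrop : ∀ w ∈ pairs, ∀ q, w.drop q ∈ pairs := by
    intro w hw q
    obtain ⟨w₀, hw₀, hw'⟩ := Finset.mem_biUnion.mp hw
    obtain ⟨q₀, _, rfl⟩ := Finset.mem_image.mp hw'
    rw [List.drop_drop]
    by_cases h : q₀ + q ≤ w₀.length
    · exact Finset.mem_biUnion.mpr ⟨w₀, hw₀, Finset.mem_image.mpr
        ⟨q₀ + q, Finset.mem_range.mpr (by omega), rfl⟩⟩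
    · have h1 : w₀.drop (q₀ + q) = [] := List.drop_eq_nil_of_le (by omega)
      have h2 : w₀.drop w₀.length = [] := List.drop_eq_nil_of_le le_rfl
      rw [h1, ← h2]
      exact Finset.mem_biUnion.mpr ⟨w₀, hw₀, Finset.mem_image.mpr
        ⟨w₀.length, Finset.mem_range.mpr (by omega), rfl⟩⟩
  have hnil : [] ∈ pairs := hbase_pairs [] (Finset.mem_insert_self _ _)
  set B₀ : Submodule k M :=
    Submodule.span k (((pairs ×ˢ s).image fun p => gof k (FreeGroup.mk p.1) • p.2 : Finset M)
      : Set M) with hB₀def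
  have hgen : ∀ w ∈ pairs, ∀ a ∈ s, gof k (FreeGroup.mk w) • a ∈ B₀ := fun w hw a ha =>
    Submodule.subset_span (Finset.mem_coe.mpr (Finset.mem_image.mpr
      ⟨(w, a), Finset.mem_product.mpr ⟨hw, ha⟩, rfl⟩))
  have hsmul_mem : ∀ (lam : Lam k μ), lam ∈ Submodule.span k
      {x : Lam k μ | ∃ w ∈ pairs, x = gof k (FreeGroup.mk w)} →
      ∀ a ∈ s, lam • a ∈ B₀ := by
    intro lam hlam a ha
    induction hlam using Submodule.span_induction with
    | mem y hy => obtain ⟨w, hw, rfl⟩ := hy; exact hgen w hw a ha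
    | zero => rw [zero_smul]; exact zero_mem _
    | add y z _ _ hy hz => rw [add_smul]; exact add_mem hy hz
    | smul t y _ hy => rw [smul_assoc]; exact Submodule.smul_mem _ _ hy
  have hcoef : ∀ (j : Fin μ) (a b : M), a ∈ s → b ∈ s → (c j a b) • b ∈ B₀ := by
    intro j a b ha hb
    rw [smul_eq_sum_single]
    refine sum_mem fun γ hγ => Submodule.smul_mem _ _ ?_
    have hγw : γ.toWord ∈ pairs := by
      refine hbase_pairs _ (Finset.mem_insert_of_mem (Finset.mem_biUnion.mpr
        ⟨j, Finset.mem_univ j, Finset.mem_biUnion.mpr ⟨a, ha, Finset.mem_biUnion.mpr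
          ⟨b, hb, Finset.mem_image.mpr ⟨γ, hγ, rfl⟩⟩⟩⟩))
    have := hgen γ.toWord hγw b hb
    rwa [FreeGroup.mk_toWord] at this
  have hB₀ : ∀ j, ∀ x ∈ B₀, th hβ j x ∈ B₀ := by
    intro j x hx
    induction hx using Submodule.span_induction with
    | mem y hy =>
        obtain ⟨p, hp, rfl⟩ := Finset.mem_image.mp (Finset.mem_coe.mp hy)
        obtain ⟨hp1, hp2⟩ := Finset.mem_product.mp hp
        rw [th_gof_smul]
        refine add_mem ?_ ?_
        · rw [← hc j p.2]
          exact sum_mem fun b hb => hcoef j p.2 b hp2 hb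
        · refine hsmul_mem _ (Submodule.span_mono ?_ (D_mem_span_drop (k := k) j p.1))
            p.2 hp2
          rintro y ⟨q, rfl⟩
          exact ⟨p.1.drop q, hdrop p.1 hp1 q, rfl⟩
    | zero => rw [map_zero]; exact zero_mem _
    | add y z _ _ hy hz => rw [map_add]; exact add_mem hy hz
    | smul t y _ hy => rw [map_smul]; exact Submodule.smul_mem _ _ hy
  have hB₀gen : Submodule.span (Lam k μ) (B₀ : Set M) = ⊤ := by
    rw [eq_top_iff, ← hs]
    refine Submodule.span_le.mpr fun a ha => Submodule.subset_span ?_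
    have := hgen [] hnil a ha
    rwa [mk_nil, gof_one, one_smul] at this
  -- the lattice
  let lsm : Lam k μ → M →ₗ[k] M := fun t =>
    { toFun := fun m => t • m
      map_add' := fun m n => smul_add t m n
      map_smul' := fun cc m => (smul_comm t cc m) }
  let A₀ : Submodule k M := B₀ ⊔ ⨆ j : Fin μ, (B₀.map (lsm (gel k μ j - 1)))
  haveI hfinB₀ : FiniteDimensional k B₀ :=
    FiniteDimensional.span_of_finite k (Finset.finite_toSet _)
  haveI : FiniteDimensional k A₀ := by
    haveI : ∀ j : Fin μ, FiniteDimensional k (B₀.map (lsm (gel k μ j - 1))) :=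
      fun j => Module.Finite.map _ _
    exact Submodule.finiteDimensional_sup _ _
  have hA₀th : ∀ i : Fin μ, ∀ x ∈ A₀, th hβ i x ∈ B₀ := by
    intro i x hx
    have hle : A₀ ≤ Submodule.comap (th hβ i) B₀ := by
      refine sup_le (fun b hb => hB₀ i b hb) (iSup_le fun j => ?_)
      rw [Submodule.map_le_iff_le_comap]
      intro b hb
      show th hβ i ((gel k μ j - 1) • b) ∈ B₀
      rw [th_single, Pi.single_apply]
      split
      · exact hb
      · exact zero_mem _
    exact hle hx
  have hBA : B₀ ≤ A₀ := le_sup_left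
  refine ⟨A₀, ⟨inferInstance, ?_, ?_, ?_⟩⟩
  · intro i x hx
    have h1 : th hβ i x ∈ B₀ := hA₀th i x hx
    have h2 : piMap k μ hβ i x ∈ B₀.map (lsm (gel k μ i - 1)) :=
      ⟨th hβ i x, h1, rfl⟩
    exact Submodule.mem_sup_right (Submodule.mem_iSup_of_mem i h2)
  · intro x hx
    have : zMap k μ hβ x = ∑ i, th hβ i x := rfl
    rw [this]
    exact hBA (sum_mem fun i _ => hA₀th i x hx)
  · rw [eq_top_iff, ← hB₀gen]
    exact Submodule.span_mono hBA

/-! ### Intersections of lattices -/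

lemma inf_lattice {A B : Submodule k M} (hA : IsLattice k μ M hβ A)
    (hB : IsLattice k μ M hβ B) : IsLattice k μ M hβ (A ⊓ B) := by
  haveI := hA.1
  haveI := hB.1
  refine ⟨Submodule.finiteDimensional_inf_left A B,
    fun i x hx => ⟨hA.2.1 i x hx.1, hB.2.1 i x hx.2⟩,
    fun x hx => ⟨hA.2.2.1 x hx.1, hB.2.2.1 x hx.2⟩, ?_⟩
  rw [eq_top_iff, ← hA.2.2.2]
  refine Submodule.span_le.mpr fun a ha => ?_
  exact lemmaP hβ (fun j a' ha' => lattice_th hβ hA j ha')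
    (fun j b' hb' => lattice_th hβ hB j hb') hB.2.2.2 a ha

lemma main [Module.Finite (Lam k μ) M] :
    IsLattice k μ M hβ (sInf {A : Submodule k M | IsLattice k μ M hβ A}) := by
  classical
  obtain ⟨A₀, hA₀⟩ := exists_lattice hβ
  set S := {A : Submodule k M | IsLattice k μ M hβ A} with hS
  let dS : Set ℕ := (fun A : Submodule k M => Module.finrank k A) '' S
  have hne : Module.finrank k A₀ ∈ dS := ⟨A₀, hA₀, rfl⟩
  obtain ⟨C, hC, hCr⟩ : ∃ C ∈ S, Module.finrank k C = sInf dS := Nat.sInf_mem ⟨_, hne⟩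
  haveI : FiniteDimensional k C := hC.1
  have hmin : ∀ A ∈ S, C ≤ A := by
    intro A hA
    have h1 : (C ⊓ A) ∈ S := inf_lattice hβ hC hA
    have h3 : C ⊓ A = C := by
      refine Submodule.eq_of_le_of_finrank_le inf_le_left ?_
      rw [hCr]
      exact Nat.sInf_le ⟨_, h1, rfl⟩
    exact h3 ▸ inf_le_right
  have hEq : sInf S = C := le_antisymm (sInf_le hC) (le_sInf hmin)
  rw [hEq]
  exact hC

end ML
end ML

/-- for a finitely generated `Λ`-module with `β_M` bijective, the
intersection of all lattices is itself a lattice (the minimal lattice). -/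
theorem minimal_lattice
    (k : Type*) [Field k] (μ : ℕ) (hμ : 1 ≤ μ)
    (M : Type*) [AddCommGroup M] [Module k M] [Module (Lam k μ) M]
    [IsScalarTower k (Lam k μ) M] [Module.Finite (Lam k μ) M]
    (hβ : Function.Bijective (betaM k μ (M := M))) :
    IsLattice k μ M hβ (sInf {A : Submodule k M | IsLattice k μ M hβ A}) := by
  exact ML.main hβ
end
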